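/- arXiv:1610.07430 — 6 statements merged into one kernel-verified Lean document; each statement's English description precedes it below -/
import Mathlib

section
/- Let C be a finite sequence of alternately coloured (red/blue) intervals on the line with pairwise distinct gap-distances (non-degenerate). Then the number of times each point is recoloured in any complete sequence of recolourings (where a recolouring changes the colour of a monochromatic interval strictly shorter than both of its neighbouring monochromatic intervals, merging the three into one) is independent of the complete sequence chosen; in particular, the final state of the coalescence process on C is independent of the order of recolourings. -/
open scoped Classical

/-- A recolouring step: the configuration (list of lengths of monochromatic intervals,
with colours alternating, determined by the colour of the first interval) contains three
consecutive intervals of lengths `a`, `b`, `c`, and the middle one, being strictly shorter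
than both neighbours, is recoloured, merging the three into one of length `a + b + c`. -/
structure Step where
  pre : List ℝ
  a : ℝ
  b : ℝ
  c : ℝ
  post : List ℝ

namespace Step

/-- The configuration before the recolouring step. -/
def src (s : Step) : List ℝ := s.pre ++ s.a :: s.b :: s.c :: s.post

/-- The configuration after the recolouring step. -/
def tgt (s : Step) : List ℝ := s.pre ++ (s.a + s.b + s.c) :: s.post

/-- A step is valid if the middle interval is strictly shorter than both neighbours. -/
def Valid (s : Step) : Prop := s.b < s.a ∧ s.b < s.c

/-- The set of points (identifying a configuration with a partition of `(0, total length]`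
into half-open intervals) that get recoloured by the step: the middle interval. -/
def middle (s : Step) : Set ℝ :=
  Set.Ioc (s.pre.sum + s.a) (s.pre.sum + s.a + s.b)

end Step

/-- `Reduces l steps m`: starting from configuration `l`, performing the given sequence of
valid recolouring steps yields configuration `m`. -/
inductive Reduces : List ℝ → List Step → List ℝ → Prop
  | nil (l : List ℝ) : Reduces l [] l
  | cons (s : Step) (hs : s.Valid) {steps : List Step} {m : List ℝ} :
      Reduces s.tgt steps m → Reduces s.src (s :: steps) m

/-- A configuration is closed if no further recolouring is possible; a sequence of
recolourings ending in a closed configuration is complete. -/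
def IsClosedConfig (l : List ℝ) : Prop := ∀ s : Step, s.Valid → s.src ≠ l

/-- The number of times the point `x` is recoloured during a sequence of steps. -/
noncomputable def recolourCount (steps : List Step) (x : ℝ) : ℕ :=
  (steps.filter fun s => decide (x ∈ s.middle)).length

/-- Non-degeneracy: with `p_i` the boundary points (partial sums of the lengths),
no two gap-distances coincide, i.e. `p_j - p_i ≠ p_k - p_j` for `i < j < k`. -/
def Nondegenerate (l : List ℝ) : Prop :=
  ∀ i j k : ℕ, i < j → j < k → k ≤ l.length →
    (l.take j).sum - (l.take i).sum ≠ (l.take k).sum - (l.take j).sum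

-- auxiliary lemmas

lemma src_length (s : Step) : s.src.length = s.pre.length + s.post.length + 3 := by
  simp [Step.src]; ring

lemma tgt_length (s : Step) : s.tgt.length + 2 = s.src.length := by
  simp [Step.src, Step.tgt]; ring

lemma tgt_pos (s : Step) (h : ∀ x ∈ s.src, 0 < x) : ∀ x ∈ s.tgt, 0 < x := by
  intro x hx
  simp only [Step.tgt, List.mem_append, List.mem_cons] at hx
  rcases hx with h1 | h2 | h3
  · exact h x (by simp [Step.src, h1])
  · have ha := h s.a (by simp [Step.src])
    have hb := h s.b (by simp [Step.src])
    have hc := h s.c (by simp [Step.src])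
    subst h2; linarith
  · exact h x (by simp [Step.src, h3])

lemma step_ext (s t : Step) (h : s.src = t.src) (hl : s.pre.length = t.pre.length) :
    s = t := by
  obtain ⟨h1, h2⟩ := List.append_inj h hl
  simp only [List.cons.injEq] at h2
  obtain ⟨ha, hb, hc, hp⟩ := h2
  cases s; cases t; simp_all

lemma recolourCount_cons (s : Step) (steps : List Step) (x : ℝ) :
    recolourCount (s :: steps) x =
      (if x ∈ s.middle then 1 else 0) + recolourCount steps x := by
  by_cases h : x ∈ s.middle <;> simp [recolourCount, List.filter_cons, h] <;> omega

lemma Ioc_congr {a b c d : ℝ} (h1 : a = c) (h2 : b = d) :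
    Set.Ioc a b = Set.Ioc c d := by rw [h1, h2]

lemma commute_lt (s t : Step) (hs : s.Valid) (ht : t.Valid) (hst : s.src = t.src)
    (hpos : ∀ x ∈ s.src, 0 < x) (hlt : s.pre.length < t.pre.length) :
    ∃ s' t' : Step, s'.Valid ∧ t'.Valid ∧ t'.src = s.tgt ∧ s'.src = t.tgt ∧
      s'.tgt = t'.tgt ∧ s'.middle = s.middle ∧ t'.middle = t.middle := by
  have ha := hpos s.a (by simp [Step.src])
  have hb := hpos s.b (by simp [Step.src])
  have hst' : s.pre ++ s.a :: s.b :: s.c :: s.post = t.pre ++ t.a :: t.b :: t.c :: t.post := hst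
  rcases lt_trichotomy (s.pre.length + 2) t.pre.length with hJ | hJ | hJ
  · -- disjoint case: j ≥ i + 3
    set k : ℕ := t.pre.length - (s.pre.length + 3) with hk
    set mid : List ℝ := s.post.take k with hmid
    set rest : List ℝ := s.post.drop k with hrest
    have hpost : s.post = mid ++ rest := (List.take_append_drop k s.post).symm
    have hsrc' : (s.pre ++ s.a :: s.b :: s.c :: mid) ++ rest
        = t.pre ++ t.a :: t.b :: t.c :: t.post := by
      simp only [List.append_assoc, List.cons_append, ← hpost]
      exact hst'
    have hklen : k ≤ s.post.length := by
      have h1 := congrArg List.length hst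
      simp [src_length] at h1
      omega
    have hlen : (s.pre ++ s.a :: s.b :: s.c :: mid).length = t.pre.length := by
      simp [hmid, List.length_take, min_eq_left hklen]
      omega
    obtain ⟨hpre, hrest'⟩ := List.append_inj hsrc' hlen
    refine ⟨⟨s.pre, s.a, s.b, s.c, mid ++ (t.a + t.b + t.c) :: t.post⟩,
            ⟨s.pre ++ (s.a + s.b + s.c) :: mid, t.a, t.b, t.c, t.post⟩,
            hs, ht, ?_, ?_, ?_, rfl, ?_⟩
    · simp only [Step.src, Step.tgt]
      rw [hpost, hrest']
      simp
    · simp only [Step.src, Step.tgt]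
      rw [← hpre]
      simp
    · simp only [Step.tgt]
      simp
    · simp only [Step.middle]
      rw [← hpre]
      simp only [List.sum_append, List.sum_cons, List.sum_nil]
      exact Ioc_congr (by ring) (by ring)
  · -- overlap case: j = i + 2
    have hta := hpos t.a (by rw [hst]; simp [Step.src])
    have htb := hpos t.b (by rw [hst]; simp [Step.src])
    have htc := hpos t.c (by rw [hst]; simp [Step.src])
    have hsrc' : (s.pre ++ [s.a, s.b]) ++ s.c :: s.post
        = t.pre ++ t.a :: t.b :: t.c :: t.post := by
      simpa [List.append_assoc] using hst'
    have hlen : (s.pre ++ [s.a, s.b]).length = t.pre.length := by simp; omega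
    obtain ⟨hpre, hrest'⟩ := List.append_inj hsrc' hlen
    simp only [List.cons.injEq] at hrest'
    obtain ⟨hca, hpost⟩ := hrest'
    refine ⟨⟨s.pre, s.a, s.b, s.c + t.b + t.c, t.post⟩,
            ⟨s.pre, s.a + s.b + s.c, t.b, t.c, t.post⟩,
            ⟨hs.1, ?_⟩, ⟨?_, ht.2⟩, ?_, ?_, ?_, rfl, ?_⟩
    · show s.b < s.c + t.b + t.c
      have := hs.2; linarith
    · show t.b < s.a + s.b + s.c
      have := ht.1; rw [← hca] at this; linarith
    · simp only [Step.src, Step.tgt]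
      rw [hpost]
    · simp only [Step.src, Step.tgt]
      rw [← hpre, hca]
      simp
    · simp only [Step.tgt]
      congr 2
      ring
    · simp only [Step.middle]
      rw [← hpre, hca]
      simp only [List.sum_append, List.sum_cons, List.sum_nil]
      exact Ioc_congr (by ring) (by ring)
  · -- adjacent case: j = i + 1, contradiction
    have hsrc' : (s.pre ++ [s.a]) ++ s.b :: s.c :: s.post
        = t.pre ++ t.a :: t.b :: t.c :: t.post := by
      simpa [List.append_assoc] using hst'
    have hlen : (s.pre ++ [s.a]).length = t.pre.length := by simp; omega
    obtain ⟨hpre, hrest'⟩ := List.append_inj hsrc' hlen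
    simp only [List.cons.injEq] at hrest'
    obtain ⟨hba, hcb, _⟩ := hrest'
    have h1 := ht.1
    rw [← hba, ← hcb] at h1
    exact absurd hs.2 (by linarith)

lemma commute (s t : Step) (hs : s.Valid) (ht : t.Valid) (hst : s.src = t.src)
    (hpos : ∀ x ∈ s.src, 0 < x) (hne : s ≠ t) :
    ∃ s' t' : Step, s'.Valid ∧ t'.Valid ∧ t'.src = s.tgt ∧ s'.src = t.tgt ∧
      s'.tgt = t'.tgt ∧ s'.middle = s.middle ∧ t'.middle = t.middle := by
  rcases lt_trichotomy s.pre.length t.pre.length with h | h | h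
  · exact commute_lt s t hs ht hst hpos h
  · exact absurd (step_ext s t hst h) hne
  · obtain ⟨t', s', h1, h2, h3, h4, h5, h6, h7⟩ :=
      commute_lt t s ht hs hst.symm (by rw [← hst]; exact hpos) h
    exact ⟨s', t', h2, h1, h4, h3, h5.symm, h7, h6⟩

lemma reduces_cases {l : List ℝ} {steps : List Step} {m : List ℝ} (h : Reduces l steps m) :
    (steps = [] ∧ m = l) ∨
      ∃ s rest, steps = s :: rest ∧ s.Valid ∧ s.src = l ∧ Reduces s.tgt rest m := by
  cases h with
  | nil => exact Or.inl ⟨rfl, rfl⟩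
  | cons s hs h' => exact Or.inr ⟨s, _, rfl, hs, rfl, h'⟩

lemma exists_complete : ∀ n (l : List ℝ), l.length ≤ n →
    ∃ steps m, Reduces l steps m ∧ IsClosedConfig m := by
  intro n
  induction n with
  | zero =>
    intro l hl
    refine ⟨[], l, Reduces.nil l, ?_⟩
    intro s _ hsrc
    have := congrArg List.length hsrc
    simp [src_length] at this
    omega
  | succ n ih =>
    intro l hl
    by_cases hcl : IsClosedConfig l
    · exact ⟨[], l, Reduces.nil l, hcl⟩
    · simp only [IsClosedConfig, not_forall] at hcl
      obtain ⟨s, hs, hsrc⟩ := hcl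
      rw [not_not] at hsrc
      have hlen : s.tgt.length ≤ n := by
        have h2 := tgt_length s
        rw [hsrc] at h2
        omega
      obtain ⟨steps, m, hred, hclm⟩ := ih s.tgt hlen
      exact ⟨s :: steps, m, hsrc ▸ Reduces.cons s hs hred, hclm⟩

lemma key : ∀ n (l : List ℝ), l.length ≤ n → (∀ x ∈ l, 0 < x) →
    ∀ (steps₁ steps₂ : List Step) (m₁ m₂ : List ℝ),
    Reduces l steps₁ m₁ → Reduces l steps₂ m₂ →
    IsClosedConfig m₁ → IsClosedConfig m₂ →
    (∀ x : ℝ, recolourCount steps₁ x = recolourCount steps₂ x) ∧ m₁ = m₂ := by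
  intro n
  induction n with
  | zero =>
    intro l hl hpos steps₁ steps₂ m₁ m₂ h₁ h₂ hc₁ hc₂
    rcases reduces_cases h₁ with ⟨e1, e2⟩ | ⟨s, rest, _, _, hsrc, _⟩
    · rcases reduces_cases h₂ with ⟨f1, f2⟩ | ⟨t, rest', _, _, htsrc, _⟩
      · subst e1 e2 f1 f2; exact ⟨fun _ => rfl, rfl⟩
      · exfalso
        have := congrArg List.length htsrc
        simp [src_length] at this
        omega
    · exfalso
      have := congrArg List.length hsrc
      simp [src_length] at this
      omega
  | succ n ih =>
    intro l hl hpos steps₁ steps₂ m₁ m₂ h₁ h₂ hc₁ hc₂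
    rcases reduces_cases h₁ with ⟨e1, e2⟩ | ⟨s, rest₁, e1, hs, hsrc, hr₁⟩
    · -- l is final for steps₁: it must be closed, so steps₂ is also trivial
      subst e1 e2
      rcases reduces_cases h₂ with ⟨f1, f2⟩ | ⟨t, rest', _, ht, htsrc, _⟩
      · subst f1 f2; exact ⟨fun _ => rfl, rfl⟩
      · exact absurd htsrc (hc₁ t ht)
    · rcases reduces_cases h₂ with ⟨f1, f2⟩ | ⟨t, rest₂, f1, ht, htsrc, hr₂⟩
      · subst f1 f2
        exact absurd hsrc (hc₂ s hs)
      · subst e1 f1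
        have hlen₁ : s.tgt.length ≤ n := by
          have h2 := tgt_length s
          rw [hsrc] at h2
          omega
        have hpos₁ : ∀ x ∈ s.tgt, 0 < x := tgt_pos s (by rw [hsrc]; exact hpos)
        by_cases hst : s = t
        · -- same first step
          subst hst
          obtain ⟨hcount, hm⟩ := ih s.tgt hlen₁ hpos₁ rest₁ rest₂ m₁ m₂ hr₁ hr₂ hc₁ hc₂
          refine ⟨fun x => ?_, hm⟩
          rw [recolourCount_cons, recolourCount_cons, hcount]
        · -- different first steps: use commutation
          have hlen₂ : t.tgt.length ≤ n := by
            have h2 := tgt_length t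
            rw [htsrc] at h2
            omega
          have hpos₂ : ∀ x ∈ t.tgt, 0 < x := tgt_pos t (by rw [htsrc]; exact hpos)
          obtain ⟨s', t', hs', ht', ht'src, hs'src, htgt, hmid_s, hmid_t⟩ :=
            commute s t hs ht (by rw [hsrc, htsrc]) (by rw [hsrc]; exact hpos) hst
          -- complete sequence from the common configuration
          have hlen₃ : t'.tgt.length ≤ n := by
            have h2 := tgt_length t'
            rw [ht'src] at h2
            omega
          obtain ⟨rest, m, hred, hclm⟩ := exists_complete _ t'.tgt le_rfl
          have hred₁ : Reduces s.tgt (t' :: rest) m := ht'src ▸ Reduces.cons t' ht' hred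
          have hred₂ : Reduces t.tgt (s' :: rest) m := by
            refine hs'src ▸ Reduces.cons s' hs' ?_
            rw [htgt]
            exact hred
          obtain ⟨hcount₁, hm₁⟩ :=
            ih s.tgt hlen₁ hpos₁ rest₁ (t' :: rest) m₁ m hr₁ hred₁ hc₁ hclm
          obtain ⟨hcount₂, hm₂⟩ :=
            ih t.tgt hlen₂ hpos₂ rest₂ (s' :: rest) m₂ m hr₂ hred₂ hc₂ hclm
          refine ⟨fun x => ?_, hm₁.trans hm₂.symm⟩
          rw [recolourCount_cons, recolourCount_cons, hcount₁ x, hcount₂ x,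
            recolourCount_cons, recolourCount_cons, hmid_s, hmid_t]
          ring


/-- For a non-degenerate coloured-interval (a finite alternating
configuration with positive lengths), the number of times each point is recoloured in
any complete sequence of recolourings is independent of the complete sequence chosen;
in particular, the final state is independent of the order of recolourings. -/
theorem recolourCount_and_final_state_independent_of_order
    (l : List ℝ) (hpos : ∀ x ∈ l, 0 < x) (hnd : Nondegenerate l)
    (steps₁ steps₂ : List Step) (m₁ m₂ : List ℝ)
    (h₁ : Reduces l steps₁ m₁) (h₂ : Reduces l steps₂ m₂)
    (hc₁ : IsClosedConfig m₁) (hc₂ : IsClosedConfig m₂) :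
    (∀ x : ℝ, recolourCount steps₁ x = recolourCount steps₂ x) ∧ m₁ = m₂ :=
  key l.length l le_rfl hpos steps₁ steps₂ m₁ m₂ h₁ h₂ hc₁ hc₂
end

section
/- A coloured-interval C is closed (i.e., equal to its closure under the coalescence process) if and only if the sequence of lengths of its monochromatic subintervals has no strict local minimum; equivalently, it consists of a (possibly empty) strictly increasing run followed by a (possibly empty) strictly decreasing run. -/
open scoped Classical

/-- A (non-degenerate) coloured-interval is closed (equal to its closure
under the coalescence process) if and only if the sequence of lengths of its monochromatic
subintervals has no strict local minimum; equivalently, it consists of a (possibly empty)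
strictly increasing run followed by a (possibly empty) strictly decreasing run. -/
theorem isClosedConfig_iff_no_local_min_iff_unimodal
    (l : List ℝ) (hpos : ∀ x ∈ l, 0 < x) (hnd : Nondegenerate l) :
    (IsClosedConfig l ↔
      ∀ i : ℕ, ∀ h : i + 2 < l.length,
        ¬ (l.get ⟨i + 1, by omega⟩ < l.get ⟨i, by omega⟩ ∧
           l.get ⟨i + 1, by omega⟩ < l.get ⟨i + 2, h⟩)) ∧
    (IsClosedConfig l ↔
      ∃ n : ℕ, ∀ i : ℕ, ∀ h : i + 1 < l.length,
        (i < n → l.get ⟨i, by omega⟩ < l.get ⟨i + 1, h⟩) ∧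
        (n ≤ i → l.get ⟨i + 1, h⟩ < l.get ⟨i, by omega⟩)) := by

  have hdist : ∀ i : ℕ, ∀ hi2 : i + 2 ≤ l.length,
      l[i]'(by omega) ≠ l[i+1]'(by omega) := by
    intro i hi h
    have := hnd i (i+1) (i+2) (by omega) (by omega) hi
    rw [List.sum_take_succ _ i (by omega), List.sum_take_succ _ (i+1) (by omega),
      List.sum_take_succ _ i (by omega)] at this
    apply this
    rw [h]; ring
  have key : IsClosedConfig l ↔ ∀ i : ℕ, ∀ h : i + 2 < l.length,
      ¬ (l[i+1]'(by omega) < l[i]'(by omega) ∧ l[i+1]'(by omega) < l[i+2]'h) := by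
    constructor
    · intro hc i h hm
      refine hc ⟨l.take i, l[i]'(by omega), l[i+1]'(by omega), l[i+2]'h, l.drop (i+3)⟩
        ⟨hm.1, hm.2⟩ ?_
      show l.take i ++ l[i]'(by omega) :: l[i+1]'(by omega) :: l[i+2]'h :: l.drop (i+3) = l
      rw [← List.drop_eq_getElem_cons (by omega : i+2 < l.length),
        ← List.drop_eq_getElem_cons (by omega : i+1 < l.length),
        ← List.drop_eq_getElem_cons (by omega : i < l.length), List.take_append_drop]
    · intro h s hs hsrc
      subst hsrc
      set i := s.pre.length with hi
      have hlen : s.src.length = i + 3 + s.post.length := by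
        simp [Step.src]; omega
      have h1 : s.src[i]'(by omega) = s.a := by
        simp [Step.src, List.getElem_append_right, hi]
      have h2 : s.src[i+1]'(by omega) = s.b := by
        simp [Step.src, List.getElem_append_right, hi]
      have h3 : s.src[i+2]'(by omega) = s.c := by
        simp [Step.src, List.getElem_append_right, hi]
      exact h i (by omega) ⟨by rw [h1, h2]; exact hs.1, by rw [h2, h3]; exact hs.2⟩
  have uni : (∀ i : ℕ, ∀ h : i + 2 < l.length,
      ¬ (l[i+1]'(by omega) < l[i]'(by omega) ∧ l[i+1]'(by omega) < l[i+2]'h)) ↔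
      (∃ n : ℕ, ∀ i : ℕ, ∀ h : i + 1 < l.length,
        (i < n → l[i]'(by omega) < l[i+1]'h) ∧ (n ≤ i → l[i+1]'h < l[i]'(by omega))) := by
    constructor
    · intro hnm
      by_cases hex : ∃ i, ∃ h : i + 1 < l.length, l[i+1]'h < l[i]'(by omega)
      · obtain ⟨hn1, hdesc⟩ := Nat.find_spec hex
        refine ⟨Nat.find hex, fun i hi => ⟨fun hlt => ?_, fun hge => ?_⟩⟩
        · have hne := hdist i (by omega)
          have := Nat.find_min hex hlt
          push_neg at this
          exact lt_of_le_of_ne (this hi) hne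
        · induction i with
          | zero =>
            have h0 : Nat.find hex = 0 := Nat.le_zero.mp hge
            simp only [h0] at hdesc; exact hdesc
          | succ k ih =>
            rcases Nat.lt_or_ge (Nat.find hex) (k+1) with hlt | hge'
            · have hprev := ih (by omega) (by omega)
              by_contra hcon
              have hne := hdist (k+1) (by omega)
              have : l[k+1]'(by omega) < l[k+2]'(by omega) :=
                lt_of_le_of_ne (not_lt.mp hcon) hne
              exact hnm k (by omega) ⟨hprev, this⟩
            · have heq : Nat.find hex = k + 1 := le_antisymm hge hge'
              simp only [heq] at hdesc; exact hdesc
      · push_neg at hex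
        refine ⟨l.length, fun i hi => ⟨fun _ => ?_, fun hge => by omega⟩⟩
        exact lt_of_le_of_ne (hex i hi) (hdist i (by omega))
    · rintro ⟨n, hun⟩ i h ⟨h1, h2⟩
      rcases Nat.lt_or_ge i n with hlt | hge
      · exact absurd ((hun i (by omega)).1 hlt) (not_lt.mpr h1.le)
      · exact absurd ((hun (i+1) (by omega)).2 (by omega)) (not_lt.mpr h2.le)
  simp only [List.get_eq_getElem]
  exact ⟨key, key.trans uni⟩
end

section
/- For any coloured-intervals C₋ and C₊ and any point x in C, the number of recolourings of x in the coalescence process on the concatenation C₋ + C + C₊ is at least the number of recolourings of x in the coalescence process on C alone. -/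
open scoped Classical

/-- A coloured-interval: the colour of its first monochromatic subinterval (`true` = red,
`false` = blue; colours alternate along the list) together with the list of lengths. -/
abbrev ColouredInterval : Type := Bool × List ℝ

/-- The colour of the `i`-th monochromatic subinterval. -/
def colourAt (C : ColouredInterval) (i : ℕ) : Bool := xor C.1 (i % 2 == 1)

/-- The colour of the last monochromatic subinterval. -/
def lastColour (C : ColouredInterval) : Bool := colourAt C (C.2.length - 1)

/-- Concatenation of coloured-intervals, merging the two end intervals when they have
the same colour. -/
def glue (C₁ C₂ : ColouredInterval) : ColouredInterval :=
  if lastColour C₁ = C₂.1 then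
    (C₁.1, C₁.2.dropLast ++ (C₁.2.getLastD 0 + C₂.2.headD 0) :: C₂.2.tail)
  else
    (C₁.1, C₁.2 ++ C₂.2)

/-! ### Auxiliary machinery -/

namespace Coalesce

/-- All entries positive. -/
def Pos (l : List ℝ) : Prop := ∀ y ∈ l, 0 < y

lemma Pos.append {l₁ l₂ : List ℝ} (h₁ : Pos l₁) (h₂ : Pos l₂) : Pos (l₁ ++ l₂) := by
  intro y hy; rcases List.mem_append.1 hy with h | h
  · exact h₁ y h
  · exact h₂ y h

/-- Add `v` to the last entry of a list. -/
def addLast (v : ℝ) : List ℝ → List ℝ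
  | [] => []
  | [x] => [x + v]
  | x :: y :: xs => x :: addLast v (y :: xs)

@[simp] lemma addLast_singleton (v x : ℝ) : addLast v [x] = [x + v] := rfl

@[simp] lemma addLast_cons_cons (v x y : ℝ) (xs : List ℝ) :
    addLast v (x :: y :: xs) = x :: addLast v (y :: xs) := rfl

lemma addLast_append (v : ℝ) (l₁ : List ℝ) {l₂ : List ℝ} (h : l₂ ≠ []) :
    addLast v (l₁ ++ l₂) = l₁ ++ addLast v l₂ := by
  induction l₁ with
  | nil => rfl
  | cons x xs ih =>
      cases xs with
      | nil => cases l₂ with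
        | nil => exact absurd rfl h
        | cons y ys => rfl
      | cons y ys => simpa [addLast] using ih

lemma addLast_zero (l : List ℝ) : addLast 0 l = l := by
  induction l with
  | nil => rfl
  | cons x xs ih =>
      cases xs with
      | nil => simp [addLast]
      | cons y ys => simp [addLast, ih]

lemma addLast_eq_dropLast {l : List ℝ} (v : ℝ) (h : l ≠ []) :
    addLast v l = l.dropLast ++ [l.getLast h + v] := by
  induction l with
  | nil => exact absurd rfl h
  | cons x xs ih =>
      cases xs with
      | nil => simp [addLast]
      | cons y ys => simp [addLast, ih (by simp)]

lemma pos_addLast {l : List ℝ} {v : ℝ} (hv : 0 ≤ v) (hl : Pos l) : Pos (addLast v l) := by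
  induction l with
  | nil => intro y hy; simp [addLast] at hy
  | cons x xs ih =>
      cases xs with
      | nil =>
          intro y hy; simp [addLast] at hy; subst hy
          have := hl x (by simp); linarith
      | cons z zs =>
          intro y hy
          rcases (by simpa [addLast] using hy : y = x ∨ y ∈ addLast v (z :: zs)) with rfl | h
          · exact hl y (by simp)
          · exact ih (fun t ht => hl t (List.mem_cons_of_mem x ht)) y h

/-- Fatten a nonempty list: add `u` to the first entry and `v` to the last. -/
def fat (u v : ℝ) (l : List ℝ) : List ℝ := (addLast v l).modifyHead (u + ·)

lemma pos_fat {l : List ℝ} {u v : ℝ} (hu : 0 ≤ u) (hv : 0 ≤ v) (hl : Pos l) :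
    Pos (fat u v l) := by
  have h := pos_addLast hv hl
  cases haL : addLast v l with
  | nil => intro y hy; simp [fat, haL] at hy
  | cons x xs =>
      intro y hy
      rcases (by simpa [fat, haL] using hy : y = u + x ∨ y ∈ xs) with rfl | hmem
      · have := h x (by simp [haL]); linarith
      · exact h y (by simp [haL, hmem])

lemma recolourCount_cons (s : Step) (steps : List Step) (x : ℝ) :
    recolourCount (s :: steps) x
      = (if x ∈ s.middle then 1 else 0) + recolourCount steps x := by
  simp only [recolourCount, List.filter_cons]
  by_cases h : x ∈ s.middle <;> simp [h] <;> omega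

lemma recolourCount_append (s t : List Step) (x : ℝ) :
    recolourCount (s ++ t) x = recolourCount s x + recolourCount t x := by
  simp [recolourCount, List.filter_append]

lemma mem_src_left {s : Step} {y : ℝ} (h : y ∈ s.pre) : y ∈ s.src := by
  simp [Step.src, h]

lemma pos_tgt {s : Step} (h : Pos s.src) : Pos s.tgt := by
  have ha : (0:ℝ) < s.a := h s.a (by simp [Step.src])
  have hb : (0:ℝ) < s.b := h s.b (by simp [Step.src])
  have hc : (0:ℝ) < s.c := h s.c (by simp [Step.src])
  intro y hy
  rcases (by simpa [Step.tgt] using hy : y ∈ s.pre ∨ y = s.a + s.b + s.c ∨ y ∈ s.post)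
    with hm | rfl | hm
  · exact h y (by simp [Step.src, hm])
  · linarith
  · exact h y (by simp [Step.src, hm])

lemma tgt_length (s : Step) : s.tgt.length + 2 = s.src.length := by
  simp [Step.src, Step.tgt]; omega

lemma Reduces.append {l m k : List ℝ} {s₁ s₂ : List Step}
    (h₁ : Reduces l s₁ m) (h₂ : Reduces m s₂ k) : Reduces l (s₁ ++ s₂) k := by
  induction h₁ with
  | nil => simpa using h₂
  | cons s hs h ih => exact Reduces.cons s hs (ih h₂)

lemma exists_complete (l : List ℝ) :
    ∃ (steps : List Step) (m : List ℝ), Reduces l steps m ∧ IsClosedConfig m := by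
  by_cases h : ∃ s : Step, s.Valid ∧ s.src = l
  · obtain ⟨s, hs, hsrc⟩ := h
    obtain ⟨steps, m, hred, hcl⟩ := exists_complete s.tgt
    exact ⟨s :: steps, m, by rw [← hsrc]; exact Reduces.cons s hs hred, hcl⟩
  · exact ⟨[], l, Reduces.nil l, fun s hs hsrc => h ⟨s, hs, hsrc⟩⟩
termination_by l.length
decreasing_by
  have h1 := tgt_length s
  have h2 : s.src.length = l.length := by rw [hsrc]
  omega

/-- Local confluence, with bookkeeping of the recoloured middle intervals. -/
lemma confl_aux (t1 t2 : Step) (h1 : t1.Valid) (h2 : t2.Valid)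
    (heq : t1.src = t2.src) (hpos : Pos t1.src) (hle : t1.pre.length ≤ t2.pre.length) :
    (t1.tgt = t2.tgt ∧ t1.middle = t2.middle) ∨
    ∃ u1 u2 : Step, u1.Valid ∧ u2.Valid ∧ u1.src = t1.tgt ∧ u2.src = t2.tgt ∧
      u1.tgt = u2.tgt ∧ u1.middle = t2.middle ∧ u2.middle = t1.middle := by
  obtain ⟨P, a, b, c, post1⟩ := t1
  obtain ⟨Q, a2, b2, c2, post2⟩ := t2
  simp only [Step.Valid] at h1 h2
  obtain ⟨hba, hbc⟩ := h1
  obtain ⟨hba2, hbc2⟩ := h2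
  simp only [Step.src] at heq hpos
  have hP : P <+: Q := by
    have h1 : P <+: Q ++ a2 :: b2 :: c2 :: post2 := heq ▸ List.prefix_append _ _
    exact List.prefix_of_prefix_length_le h1 (List.prefix_append _ _) hle
  obtain ⟨mid, rfl⟩ := hP
  rw [List.append_assoc] at heq
  have key := List.append_cancel_left heq
  have ha : (0:ℝ) < a := hpos a (by simp)
  have hb : (0:ℝ) < b := hpos b (by simp)
  rcases mid with _ | ⟨x, _ | ⟨y, _ | ⟨z, mid'⟩⟩⟩
  · -- same step
    simp only [List.nil_append, List.cons.injEq] at key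
    obtain ⟨rfl, rfl, rfl, rfl⟩ := key
    left
    constructor
    · simp [Step.tgt]
    · simp [Step.middle]
  · -- adjacent: impossible
    exfalso
    simp only [List.cons_append, List.nil_append, List.cons.injEq] at key
    obtain ⟨rfl, rfl, rfl, rfl⟩ := key
    linarith
  · -- overlap in one interval
    right
    simp only [List.cons_append, List.nil_append, List.cons.injEq] at key
    obtain ⟨rfl, rfl, rfl, rfl⟩ := key
    have hb2 : (0:ℝ) < b2 := hpos b2 (by simp)
    have hc2 : (0:ℝ) < c2 := hpos c2 (by simp)
    refine ⟨⟨P, a + b + c, b2, c2, post2⟩, ⟨P, a, b, c + b2 + c2, post2⟩,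
      ⟨by show b2 < a + b + c; linarith, hbc2⟩,
      ⟨hba, by show b < c + b2 + c2; linarith⟩, ?_, ?_, ?_, ?_, ?_⟩
    · simp [Step.src, Step.tgt]
    · simp [Step.src, Step.tgt]
    · simp only [Step.tgt, List.append_cancel_left_eq, List.cons.injEq, and_true]
      ring
    · simp only [Step.middle, List.sum_append, List.sum_cons, List.sum_nil]
      congr 1 <;> ring
    · rfl
  · -- disjoint
    right
    simp only [List.cons_append, List.nil_append, List.cons.injEq] at key
    obtain ⟨rfl, rfl, rfl, rfl⟩ := key
    refine ⟨⟨P ++ (a + b + c) :: mid', a2, b2, c2, post2⟩,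
      ⟨P, a, b, c, mid' ++ (a2 + b2 + c2) :: post2⟩,
      ⟨hba2, hbc2⟩, ⟨hba, hbc⟩, ?_, ?_, ?_, ?_, ?_⟩
    · simp [Step.src, Step.tgt]
    · simp [Step.src, Step.tgt]
    · simp [Step.tgt]
    · simp only [Step.middle, List.sum_append, List.sum_cons]
      congr 1 <;> ring
    · rfl

lemma confl (t1 t2 : Step) (h1 : t1.Valid) (h2 : t2.Valid)
    (heq : t1.src = t2.src) (hpos : Pos t1.src) :
    (t1.tgt = t2.tgt ∧ t1.middle = t2.middle) ∨
    ∃ u1 u2 : Step, u1.Valid ∧ u2.Valid ∧ u1.src = t1.tgt ∧ u2.src = t2.tgt ∧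
      u1.tgt = u2.tgt ∧ u1.middle = t2.middle ∧ u2.middle = t1.middle := by
  rcases le_total t1.pre.length t2.pre.length with hle | hle
  · exact confl_aux t1 t2 h1 h2 heq hpos hle
  · rcases confl_aux t2 t1 h2 h1 heq.symm (heq ▸ hpos) hle with ⟨ht, hm⟩ | ⟨u1, u2, hv1, hv2, hs1, hs2, ht, hm1, hm2⟩
    · exact Or.inl ⟨ht.symm, hm.symm⟩
    · exact Or.inr ⟨u2, u1, hv2, hv1, hs2, hs1, ht.symm, hm2, hm1⟩

lemma reduces_nil_inv {l m : List ℝ} (h : Reduces l [] m) : m = l := by cases h; rfl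

lemma reduces_cons_inv {l m : List ℝ} {t : Step} {steps : List Step}
    (h : Reduces l (t :: steps) m) : t.Valid ∧ l = t.src ∧ Reduces t.tgt steps m := by
  cases h; exact ⟨‹_›, rfl, ‹_›⟩

/-- Well-definedness: any two complete reduction sequences from a positive configuration
recolour each point the same number of times. -/
lemma count_unique (l : List ℝ) (hp : Pos l) (s1 : List Step) (m1 : List ℝ)
    (h1 : Reduces l s1 m1) (hc1 : IsClosedConfig m1)
    (s2 : List Step) (m2 : List ℝ) (h2 : Reduces l s2 m2) (hc2 : IsClosedConfig m2)
    (x : ℝ) : recolourCount s1 x = recolourCount s2 x := by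
  match s1, s2 with
  | [], [] => rfl
  | [], t2 :: r2 =>
      obtain ⟨ht2, hl2, _⟩ := reduces_cons_inv h2
      exact absurd (hl2 ▸ (reduces_nil_inv h1)).symm (hc1 t2 ht2)
  | t1 :: r1, [] =>
      obtain ⟨ht1, hl1, _⟩ := reduces_cons_inv h1
      exact absurd (hl1 ▸ (reduces_nil_inv h2)).symm (hc2 t1 ht1)
  | t1 :: r1, t2 :: r2 =>
      obtain ⟨ht1, hl1, h1'⟩ := reduces_cons_inv h1
      obtain ⟨ht2, hl2, h2'⟩ := reduces_cons_inv h2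
      have heq : t1.src = t2.src := by rw [← hl1, hl2]
      have hpos1 : Pos t1.src := hl1 ▸ hp
      have hp1 : Pos t1.tgt := pos_tgt hpos1
      have hp2 : Pos t2.tgt := pos_tgt (heq ▸ hpos1)
      rcases confl t1 t2 ht1 ht2 heq hpos1 with ⟨htgt, hmid⟩ |
        ⟨u1, u2, hv1, hv2, hs1, hs2, htt, hm1, hm2⟩
      · have ih := count_unique t1.tgt hp1 r1 m1 h1' hc1 r2 m2 (htgt ▸ h2') hc2 x
        rw [recolourCount_cons, recolourCount_cons, ih, hmid]
      · obtain ⟨sr, mr, hr, hcr⟩ := exists_complete u1.tgt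
        have red1 : Reduces t1.tgt (u1 :: sr) mr := by
          rw [← hs1]; exact Reduces.cons u1 hv1 hr
        have red2 : Reduces t2.tgt (u2 :: sr) mr := by
          rw [← hs2]; exact Reduces.cons u2 hv2 (htt ▸ hr)
        have e1 := count_unique t1.tgt hp1 r1 m1 h1' hc1 (u1 :: sr) mr red1 hcr x
        have e2 := count_unique t2.tgt hp2 r2 m2 h2' hc2 (u2 :: sr) mr red2 hcr x
        rw [recolourCount_cons, recolourCount_cons, e1, e2,
          recolourCount_cons, recolourCount_cons, hm1, hm2]
        ring
termination_by l.length
decreasing_by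
  all_goals
    (first
      | (have ha := tgt_length t1
         have hb : t1.src.length = l.length := by rw [hl1]
         omega)
      | (have ha := tgt_length t2
         have hb : t2.src.length = l.length := by rw [hl2]
         omega))

/-- `fat` on a cons with nonempty tail. -/
lemma fat_cons (u v x : ℝ) {xs : List ℝ} (h : xs ≠ []) :
    fat u v (x :: xs) = (u + x) :: addLast v xs := by
  cases xs with
  | nil => exact absurd rfl h
  | cons y ys => rfl

/-- A valid step on `l` can be simulated on `A ++ fat u v l ++ B`, recolouring the
shifted middle interval. -/
lemma sim_step (A B : List ℝ) (u v : ℝ) (hu : 0 ≤ u) (hv : 0 ≤ v) (s : Step)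
    (hs : s.Valid) :
    ∃ s' : Step, s'.Valid ∧ s'.src = A ++ fat u v s.src ++ B ∧
      s'.tgt = A ++ fat u v s.tgt ++ B ∧
      ∀ x : ℝ, (x + (A.sum + u)) ∈ s'.middle ↔ x ∈ s.middle := by
  obtain ⟨pre, a, b, c, post⟩ := s
  simp only [Step.Valid] at hs
  obtain ⟨hba, hbc⟩ := hs
  rcases pre with _ | ⟨p, pre'⟩ <;> rcases post with _ | ⟨q, post'⟩
  · refine ⟨⟨A, u + a, b, c + v, B⟩, ⟨by show b < u + a; linarith, by show b < c + v; linarith⟩,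
      ?_, ?_, ?_⟩
    · simp [Step.src, fat, addLast]
    · simp only [Step.tgt, fat, List.nil_append, addLast_singleton, List.modifyHead,
        List.append_assoc, List.singleton_append, List.append_cancel_left_eq,
        List.cons.injEq, and_true]
      ring
    · intro x
      simp only [Step.middle, Set.mem_Ioc, List.sum_append, List.sum_nil, List.sum_cons]
      constructor <;> (rintro ⟨g1, g2⟩; constructor <;> linarith)
  · refine ⟨⟨A, u + a, b, c, addLast v (q :: post') ++ B⟩,
      ⟨by show b < u + a; linarith, hbc⟩, ?_, ?_, ?_⟩
    · simp [Step.src, fat, addLast_cons_cons, List.modifyHead]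
    · simp only [Step.tgt, fat, List.nil_append, addLast_cons_cons, List.modifyHead,
        List.cons_append, List.append_assoc, List.append_cancel_left_eq, List.cons.injEq]
      exact ⟨by ring, trivial⟩
    · intro x
      simp only [Step.middle, Set.mem_Ioc, List.sum_append, List.sum_nil, List.sum_cons]
      constructor <;> (rintro ⟨g1, g2⟩; constructor <;> linarith)
  · refine ⟨⟨A ++ (u + p) :: pre', a, b, c + v, B⟩,
      ⟨hba, by show b < c + v; linarith⟩, ?_, ?_, ?_⟩
    · simp only [Step.src, List.cons_append]
      rw [fat_cons u v p (by simp), addLast_append v pre' (by simp)]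
      simp [addLast]
    · simp only [Step.tgt, List.cons_append]
      rw [fat_cons u v p (by simp), addLast_append v pre' (by simp)]
      simp only [addLast_singleton, List.cons_append, List.append_assoc,
        List.append_cancel_left_eq, List.cons.injEq, List.singleton_append,
        List.append_cancel_right_eq, true_and, and_true]
      constructor
      · ring
      · rfl
    · intro x
      simp only [Step.middle, Set.mem_Ioc, List.sum_append, List.sum_nil, List.sum_cons]
      constructor <;> (rintro ⟨g1, g2⟩; constructor <;> linarith)
  · refine ⟨⟨A ++ (u + p) :: pre', a, b, c, addLast v (q :: post') ++ B⟩,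
      ⟨hba, hbc⟩, ?_, ?_, ?_⟩
    · simp only [Step.src, List.cons_append]
      rw [fat_cons u v p (by simp), addLast_append v pre' (by simp)]
      simp [addLast_cons_cons]
    · simp only [Step.tgt, List.cons_append]
      rw [fat_cons u v p (by simp), addLast_append v pre' (by simp)]
      simp [addLast_cons_cons]
    · intro x
      simp only [Step.middle, Set.mem_Ioc, List.sum_append, List.sum_nil, List.sum_cons]
      constructor <;> (rintro ⟨g1, g2⟩; constructor <;> linarith)

/-- A reduction sequence on `l` can be simulated on `A ++ fat u v l ++ B`, preserving
recolour counts at shifted points. -/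
lemma sim_reduces (A B : List ℝ) (u v : ℝ) (hu : 0 ≤ u) (hv : 0 ≤ v)
    {l m : List ℝ} {steps : List Step} (h : Reduces l steps m) :
    ∃ steps' : List Step, Reduces (A ++ fat u v l ++ B) steps' (A ++ fat u v m ++ B) ∧
      ∀ x : ℝ, recolourCount steps' (x + (A.sum + u)) = recolourCount steps x := by
  induction h with
  | nil l => exact ⟨[], Reduces.nil _, fun x => rfl⟩
  | cons s hs h ih =>
      obtain ⟨steps'', hred, hcnt⟩ := ih
      obtain ⟨s', hv', hsrc', htgt', hmid'⟩ := sim_step A B u v hu hv s hs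
      refine ⟨s' :: steps'', ?_, ?_⟩
      · rw [← hsrc']
        exact Reduces.cons s' hv' (by rw [htgt']; exact hred)
      · intro x
        rw [recolourCount_cons, recolourCount_cons, hcnt x]
        congr 1
        simp [hmid' x]

lemma pos_dropLast {l : List ℝ} (h : Pos l) : Pos l.dropLast :=
  fun y hy => h y ((List.dropLast_sublist l).subset hy)

lemma pos_tail {l : List ℝ} (h : Pos l) : Pos l.tail :=
  fun y hy => h y ((List.tail_sublist l).subset hy)

lemma glue_left (C1 C2 : ColouredInterval) (h1 : C1.2 ≠ []) (h2 : C2.2 ≠ [])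
    (hp : Pos C1.2) :
    ∃ (A : List ℝ) (u : ℝ), 0 ≤ u ∧ Pos A ∧ A.sum + u = C1.2.sum ∧
      (glue C1 C2).2 = A ++ C2.2.modifyHead (u + ·) := by
  obtain ⟨ys, y, hy⟩ := (List.eq_nil_or_concat C1.2).resolve_left h1
  rw [List.concat_eq_append] at hy
  obtain ⟨h, t, ht⟩ : ∃ h t, C2.2 = h :: t := by
    cases hc : C2.2 with
    | nil => exact absurd hc h2
    | cons h t => exact ⟨h, t, rfl⟩
  rcases eq_or_ne (lastColour C1) C2.1 with hcol | hcol
  · refine ⟨ys, y, le_of_lt (hp y (by rw [hy]; simp)), fun z hz => hp z (by rw [hy]; simp [hz]), ?_, ?_⟩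
    · rw [hy]; simp [List.sum_append]
    · simp [glue, hcol, hy, ht, List.getLastD_concat, List.dropLast_concat]
  · refine ⟨C1.2, 0, le_refl 0, hp, by ring, ?_⟩
    simp [glue, hcol, ht]

lemma glue_right (C1 C2 : ColouredInterval) (h1 : C1.2 ≠ []) (hp2 : Pos C2.2) :
    ∃ (B : List ℝ) (v : ℝ), 0 ≤ v ∧ Pos B ∧ (glue C1 C2).2 = addLast v C1.2 ++ B := by
  obtain ⟨ys, y, hy⟩ := (List.eq_nil_or_concat C1.2).resolve_left h1
  rw [List.concat_eq_append] at hy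
  rcases eq_or_ne (lastColour C1) C2.1 with hcol | hcol
  · refine ⟨C2.2.tail, C2.2.headD 0, ?_, pos_tail hp2, ?_⟩
    · cases hc : C2.2 with
      | nil => simp
      | cons h t => exact le_of_lt (hp2 h (by rw [hc]; simp))
    · rw [hy, addLast_append _ ys (by simp), addLast_singleton]
      simp [glue, hcol, hy, List.getLastD_concat, List.dropLast_concat]
  · exact ⟨C2.2, 0, le_refl 0, hp2, by simp [glue, hcol, addLast_zero]⟩

lemma addLast_modifyHead (u v : ℝ) {l : List ℝ} (h : l ≠ []) :
    addLast v (l.modifyHead (u + ·)) = fat u v l := by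
  cases l with
  | nil => exact absurd rfl h
  | cons x xs =>
      cases xs with
      | nil =>
          show [u + x + v] = [u + (x + v)]
          norm_num; ring
      | cons y ys => rfl

/-- Decomposition of the doubly-glued configuration. -/
lemma glue_glue (Cm C Cp : ColouredInterval) (hnem : Cm.2 ≠ []) (hne : C.2 ≠ [])
    (hposm : Pos Cm.2) (hposp : Pos Cp.2) :
    ∃ (A B : List ℝ) (u v : ℝ), 0 ≤ u ∧ 0 ≤ v ∧ Pos A ∧ Pos B ∧
      A.sum + u = Cm.2.sum ∧ (glue (glue Cm C) Cp).2 = A ++ fat u v C.2 ++ B := by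
  obtain ⟨A, u, hu, hA, hsum, hD⟩ := glue_left Cm C hnem hne hposm
  have hmne : C.2.modifyHead (u + ·) ≠ [] := by
    cases hc : C.2 with
    | nil => exact absurd hc hne
    | cons h t => simp
  have hDne : (glue Cm C).2 ≠ [] := by
    rw [hD]
    intro hcon
    exact hmne (List.append_eq_nil_iff.1 hcon).2
  obtain ⟨B, v, hv, hB, hG⟩ := glue_right (glue Cm C) Cp hDne hposp
  refine ⟨A, B, u, v, hu, hv, hA, hB, hsum, ?_⟩
  rw [hG, hD, addLast_append _ A hmne, addLast_modifyHead u v hne]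

lemma main_proof (Cm C Cp : ColouredInterval)
    (hnem : Cm.2 ≠ []) (hne : C.2 ≠ []) (hnep : Cp.2 ≠ [])
    (hposm : Pos Cm.2) (hpos : Pos C.2) (hposp : Pos Cp.2)
    (steps : List Step) (m : List ℝ)
    (h : Reduces C.2 steps m) (hc : IsClosedConfig m)
    (steps' : List Step) (m' : List ℝ)
    (h' : Reduces (glue (glue Cm C) Cp).2 steps' m') (hc' : IsClosedConfig m')
    (x : ℝ) :
    recolourCount steps x ≤ recolourCount steps' (x + Cm.2.sum) := by
  obtain ⟨A, B, u, v, hu, hv, hA, hB, hsum, hG⟩ := glue_glue Cm C Cp hnem hne hposm hposp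
  obtain ⟨stepsE, hredE, hcnt⟩ := sim_reduces A B u v hu hv h
  obtain ⟨ext, mE, hext, hclE⟩ := exists_complete (A ++ fat u v m ++ B)
  have hfull : Reduces (glue (glue Cm C) Cp).2 (stepsE ++ ext) mE := by
    rw [hG]; exact Reduces.append hredE hext
  have hposG : Pos (glue (glue Cm C) Cp).2 := by
    rw [hG]; exact Pos.append (Pos.append hA (pos_fat hu hv hpos)) hB
  have key := count_unique _ hposG (stepsE ++ ext) mE hfull hclE steps' m' h' hc' (x + Cm.2.sum)
  have hc2 := hcnt x
  rw [hsum] at hc2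
  rw [← key, recolourCount_append, ← hc2]
  exact Nat.le_add_right _ _

end Coalesce

/-- For coloured-intervals `Cm`, `C`, `Cp` and a point `x ∈ C`, the number
of recolourings of `x` in the coalescence process on the concatenation `Cm + C + Cp` is at
least the number of recolourings of `x` in the coalescence process on `C` alone. -/
theorem recolourCount_mono_of_concat
    (Cm C Cp : ColouredInterval)
    (hnem : Cm.2 ≠ []) (hne : C.2 ≠ []) (hnep : Cp.2 ≠ [])
    (hposm : ∀ y ∈ Cm.2, 0 < y) (hpos : ∀ y ∈ C.2, 0 < y) (hposp : ∀ y ∈ Cp.2, 0 < y)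
    (hnd : Nondegenerate C.2) (hnd' : Nondegenerate (glue (glue Cm C) Cp).2)
    (steps : List Step) (m : List ℝ)
    (h : Reduces C.2 steps m) (hc : IsClosedConfig m)
    (steps' : List Step) (m' : List ℝ)
    (h' : Reduces (glue (glue Cm C) Cp).2 steps' m') (hc' : IsClosedConfig m')
    (x : ℝ) (hx : x ∈ Set.Ioc 0 C.2.sum) :
    recolourCount steps x ≤ recolourCount steps' (x + Cm.2.sum) := by
  exact Coalesce.main_proof Cm C Cp hnem hne hnep hposm hpos hposp steps m h hc steps' m' h' hc' x
end

section
/- If C₋ and C₊ are red-ended coloured-intervals and B is a blue interval, then the red-content of the closure of C₋ + B + C₊ satisfies r(C₋ + B + C₊) ≤ 2·r(C₋) + 2·r(C₊). -/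
open scoped Classical

/-- For a red-ended configuration (a list of lengths of odd length, the intervals at even
indices being red and those at odd indices blue), the total length of the red intervals. -/
def redSum (l : List ℝ) : ℝ :=
  ∑ i ∈ Finset.range l.length, if i % 2 = 0 then l.getD i 0 else 0

/-!
Coalescence is confluent on configurations of positive lengths, so the closure of `C₋ + B + C₊`
can be computed by first closing `C₋` and `C₊` and then continuing from `[C₋] + B + [C₊]`. Since
`[C₋]` and `[C₊]` are closed, every later recolouring involves the interval grown from `B`, which
thereby absorbs a suffix of `[C₋]` and a prefix of `[C₊]` while all other intervals keep their
colours. Whenever the grown interval is red, it is at most twice the red content it has absorbed: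
each merge adds one recoloured interval shorter than a red interval absorbed in the same merge.
-/

open Relation

def blueSum (l : List ℝ) : ℝ :=
  ∑ i ∈ Finset.range l.length, if i % 2 = 1 then l.getD i 0 else 0

@[simp] lemma redSum_nil : redSum [] = 0 := rfl

@[simp] lemma blueSum_nil : blueSum [] = 0 := rfl

@[simp] lemma redSum_cons (a : ℝ) (t : List ℝ) : redSum (a :: t) = a + blueSum t := by
  simp [redSum, blueSum, Finset.sum_range_succ', Nat.succ_mod_two_eq_zero_iff, add_comm]

@[simp] lemma blueSum_cons (a : ℝ) (t : List ℝ) : blueSum (a :: t) = redSum t := by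
  simp [redSum, blueSum, Finset.sum_range_succ', Nat.succ_mod_two_eq_one_iff]

lemma redSum_append_and_blueSum_append (A B : List ℝ) :
    redSum (A ++ B) = redSum A + (if Even A.length then redSum B else blueSum B) ∧
      blueSum (A ++ B) = blueSum A + (if Even A.length then blueSum B else redSum B) := by
  induction A with
  | nil => simp
  | cons a A ih => by_cases h : Even A.length <;> simp [ih, h, Nat.even_add_one, add_assoc]

lemma redSum_append (A B : List ℝ) :
    redSum (A ++ B) = redSum A + if Even A.length then redSum B else blueSum B :=
  (redSum_append_and_blueSum_append A B).1

lemma redSum_nonneg_and_blueSum_nonneg {l : List ℝ} (h : ∀ x ∈ l, 0 ≤ x) :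
    0 ≤ redSum l ∧ 0 ≤ blueSum l := by
  induction l with
  | nil => simp
  | cons a t ih =>
    simp only [List.mem_cons, forall_eq_or_imp] at h
    have := ih h.2
    simp only [redSum_cons, blueSum_cons]
    constructor <;> linarith [h.1]

inductive Merges : List ℝ → List ℝ → Prop
  | here {a b c : ℝ} (t : List ℝ) : b < a → b < c → Merges (a :: b :: c :: t) ((a + b + c) :: t)
  | cons (x : ℝ) {l l' : List ℝ} : Merges l l' → Merges (x :: l) (x :: l')

namespace Merges

variable {l l' : List ℝ}

lemma of_valid {s : Step} (hs : s.Valid) : Merges s.src s.tgt := by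
  obtain ⟨pre, a, b, c, post⟩ := s
  induction pre with
  | nil => exact here post hs.1 hs.2
  | cons x pre ih => exact cons x (ih hs)

lemma exists_step (h : Merges l l') : ∃ s : Step, s.Valid ∧ s.src = l ∧ s.tgt = l' := by
  induction h with
  | here t hba hbc => exact ⟨⟨[], _, _, _, t⟩, ⟨hba, hbc⟩, rfl, rfl⟩
  | cons x _ ih =>
    obtain ⟨⟨pre, a, b, c, post⟩, hs, rfl, rfl⟩ := ih
    exact ⟨⟨x :: pre, a, b, c, post⟩, hs, rfl, rfl⟩

lemma length_eq (h : Merges l l') : l.length = l'.length + 2 := by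
  induction h <;> simp [*]

lemma pos (h : Merges l l') (hl : ∀ x ∈ l, 0 < x) : ∀ x ∈ l', 0 < x := by
  induction h with
  | here t =>
    simp only [List.mem_cons, forall_eq_or_imp] at hl ⊢
    exact ⟨by linarith [hl.1, hl.2.1, hl.2.2.1], hl.2.2.2⟩
  | cons x _ ih =>
    simp only [List.mem_cons, forall_eq_or_imp] at hl ⊢
    exact ⟨hl.1, ih hl.2⟩

lemma append_left (A : List ℝ) (h : Merges l l') : Merges (A ++ l) (A ++ l') := by
  induction A with
  | nil => exact h
  | cons x A ih => exact cons x ih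

lemma append_right (B : List ℝ) (h : Merges l l') : Merges (l ++ B) (l' ++ B) := by
  induction h with
  | here t hba hbc => exact here (t ++ B) hba hbc
  | cons x _ ih => exact cons x ih

lemma join_here {a b c : ℝ} {t l₂ : List ℝ} (hba : b < a) (hbc : b < c)
    (hpos : ∀ x ∈ a :: b :: c :: t, 0 < x) (h₂ : Merges (a :: b :: c :: t) l₂) :
    (a + b + c) :: t = l₂ ∨ ∃ l₃, Merges ((a + b + c) :: t) l₃ ∧ Merges l₂ l₃ := by
  rcases h₂ with _ | ⟨_, h₂⟩
  · exact Or.inl rfl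
  rcases h₂ with ⟨_, hcb, _⟩ | ⟨_, h₂⟩
  · exact absurd hbc hcb.not_gt
  rcases h₂ with @⟨_, d, e, t', hdc, hde⟩ | ⟨_, h₂⟩
  · simp only [List.mem_cons, forall_eq_or_imp] at hpos
    refine Or.inr ⟨(a + b + c + d + e) :: t', here t' (by linarith) hde, ?_⟩
    rw [show a + b + c + d + e = a + b + (c + d + e) by ring]
    exact here t' hba (by linarith)
  · exact Or.inr ⟨_, cons _ h₂, here _ hba hbc⟩

lemma diamond {l₁ l₂ : List ℝ} (hpos : ∀ x ∈ l, 0 < x) (h₁ : Merges l l₁) (h₂ : Merges l l₂) :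
    l₁ = l₂ ∨ ∃ l₃, Merges l₁ l₃ ∧ Merges l₂ l₃ := by
  induction h₁ generalizing l₂ with
  | here t hba hbc => exact join_here hba hbc hpos h₂
  | cons x h₁ ih =>
    rcases h₂ with ⟨t, hba, hbc⟩ | ⟨_, h₂⟩
    · rcases join_here hba hbc hpos (cons x h₁) with h | ⟨l₃, h₃, h₃'⟩
      · exact Or.inl h.symm
      · exact Or.inr ⟨l₃, h₃', h₃⟩
    · rcases ih (fun y hy => hpos y (List.mem_cons_of_mem x hy)) h₂ with rfl | ⟨l₃, h₃, h₃'⟩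
      · exact Or.inl rfl
      · exact Or.inr ⟨x :: l₃, cons x h₃, cons x h₃'⟩

variable {m : List ℝ}

lemma reflTransGen_pos (h : ReflTransGen Merges l m) (hl : ∀ x ∈ l, 0 < x) :
    ∀ x ∈ m, 0 < x := by
  induction h with
  | refl => exact hl
  | tail _ h ih => exact h.pos ih

lemma reflTransGen_length_mod_two (h : ReflTransGen Merges l m) :
    m.length % 2 = l.length % 2 := by
  induction h with
  | refl => rfl
  | tail _ h ih => rw [← ih, h.length_eq, Nat.add_mod_right]

lemma join_of_pos {m₁ m₂ : List ℝ} (hpos : ∀ x ∈ l, 0 < x) (h₁ : ReflTransGen Merges l m₁)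
    (h₂ : ReflTransGen Merges l m₂) : Join (ReflTransGen Merges) m₁ m₂ := by
  let r : List ℝ → List ℝ → Prop := fun l l' => Merges l l' ∧ ∀ x ∈ l, 0 < x
  have restrict {m : List ℝ} (h : ReflTransGen Merges l m) : ReflTransGen r l m := by
    induction h with
    | refl => rfl
    | tail h' h ih => exact ih.tail ⟨h, reflTransGen_pos h' hpos⟩
  have hr (a b c : List ℝ) (hab : r a b) (hac : r a c) :
      ∃ d, ReflGen r b d ∧ ReflTransGen r c d := by
    rcases diamond hab.2 hab.1 hac.1 with rfl | ⟨d, hbd, hcd⟩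
    · exact ⟨b, ReflGen.refl, ReflTransGen.refl⟩
    · exact ⟨d, ReflGen.single ⟨hbd, hab.1.pos hab.2⟩, ReflTransGen.single ⟨hcd, hac.1.pos hac.2⟩⟩
  obtain ⟨d, h₁d, h₂d⟩ := church_rosser hr (restrict h₁) (restrict h₂)
  have forget : ReflTransGen r ≤ ReflTransGen Merges := ReflTransGen.mono fun _ _ h => h.1
  exact ⟨d, forget _ _ h₁d, forget _ _ h₂d⟩

end Merges

lemma Reduces.reflTransGen {l m : List ℝ} {steps : List Step} (h : Reduces l steps m) :
    ReflTransGen Merges l m := by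
  induction h with
  | nil => rfl
  | cons s hs _ ih => exact ReflTransGen.head (Merges.of_valid hs) ih

namespace IsClosedConfig

variable {l l' : List ℝ}

lemma not_merges (hl : IsClosedConfig l) : ¬ Merges l l' := fun h => by
  obtain ⟨s, hs, hsrc, -⟩ := h.exists_step
  exact hl s hs hsrc

lemma eq_of_reflTransGen (hl : IsClosedConfig l) (h : ReflTransGen Merges l l') : l = l' := by
  rcases h.cases_head with h | ⟨_, h, -⟩
  · exact h
  · exact absurd h hl.not_merges

lemma of_append_left {L : List ℝ} (h : IsClosedConfig (l ++ L)) : IsClosedConfig l :=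
  fun _ hs hsrc => h.not_merges ((hsrc ▸ Merges.of_valid hs).append_right L)

lemma of_append_right {L : List ℝ} (h : IsClosedConfig (L ++ l)) : IsClosedConfig l :=
  fun _ hs hsrc => h.not_merges ((hsrc ▸ Merges.of_valid hs).append_left L)

end IsClosedConfig

lemma Merges.of_append_cons {L R c : List ℝ} {v : ℝ} (hL : IsClosedConfig L)
    (hR : IsClosedConfig R) (h : Merges (L ++ v :: R) c) :
    (∃ L₀ a u, L = L₀ ++ [a, u] ∧ u < a ∧ u < v ∧ c = L₀ ++ (a + u + v) :: R) ∨
    (∃ L₀ a w R₀, L = L₀ ++ [a] ∧ R = w :: R₀ ∧ v < a ∧ v < w ∧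
      c = L₀ ++ (a + v + w) :: R₀) ∨
    (∃ u w R₀, R = u :: w :: R₀ ∧ u < v ∧ u < w ∧ c = L ++ (v + u + w) :: R₀) := by
  induction L generalizing c with
  | nil =>
    rcases h with ⟨R₀, huv, huw⟩ | ⟨_, h⟩
    · exact Or.inr (Or.inr ⟨_, _, R₀, rfl, huv, huw, rfl⟩)
    · exact absurd h hR.not_merges
  | cons x L ih =>
    rw [List.cons_append] at h
    generalize hE : L ++ v :: R = t at h
    rcases h with ⟨t', hyx, hyz⟩ | ⟨_, h⟩
    · rcases L with _ | ⟨y, _ | ⟨z, L⟩⟩ <;> simp only [List.nil_append, List.cons_append,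
        List.cons.injEq] at hE
      · obtain ⟨rfl, rfl⟩ := hE
        exact Or.inr (Or.inl ⟨[], x, _, t', rfl, rfl, hyx, hyz, rfl⟩)
      · obtain ⟨rfl, rfl, rfl⟩ := hE
        exact Or.inl ⟨[], x, y, rfl, hyx, hyz, rfl⟩
      · obtain ⟨rfl, rfl, -⟩ := hE
        exact absurd (Merges.here L hyx hyz) hL.not_merges
    · subst hE
      rcases ih (hL.of_append_right (L := [x])) h with
        ⟨L₀, a, u, rfl, h₁, h₂, rfl⟩ | ⟨L₀, a, w, R₀, rfl, rfl, h₁, h₂, rfl⟩ |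
          ⟨u, w, R₀, rfl, h₁, h₂, rfl⟩
      · exact Or.inl ⟨x :: L₀, a, u, rfl, h₁, h₂, rfl⟩
      · exact Or.inr (Or.inl ⟨x :: L₀, a, w, R₀, rfl, rfl, h₁, h₂, rfl⟩)
      · exact Or.inr (Or.inr ⟨u, w, R₀, rfl, h₁, h₂, rfl⟩)

/-- `c = L ++ v :: R`, where the interval `v` has absorbed the suffix `L'` of `mm = L ++ L'` and
the prefix `R'` of `mp = R' ++ R`. In `mm ++ b :: mp` the blue `b` sits at index `mm.length`,
so `v` is red exactly when `L` has even length, and then `L'` and `R'` both start at a red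
interval. -/
def GluedConfig (mm mp c : List ℝ) : Prop :=
  ∃ L L' R' R v, mm = L ++ L' ∧ mp = R' ++ R ∧ c = L ++ v :: R ∧
    (Even L.length ↔ Odd R'.length) ∧ (Even L.length → v ≤ 2 * (redSum L' + redSum R'))

namespace GluedConfig

variable {mm mp c c' : List ℝ}

lemma append_cons (hmm : Odd mm.length) (mp : List ℝ) (b : ℝ) :
    GluedConfig mm mp (mm ++ b :: mp) :=
  ⟨mm, [], [], mp, b, by simp, rfl, rfl, by simpa using hmm,
    fun h => absurd hmm (Nat.not_odd_iff_even.2 h)⟩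

lemma merges (hcm : IsClosedConfig mm) (hcp : IsClosedConfig mp) (hnnm : ∀ x ∈ mm, 0 ≤ x)
    (hnnp : ∀ x ∈ mp, 0 ≤ x) (hg : GluedConfig mm mp c) (h : Merges c c') :
    GluedConfig mm mp c' := by
  obtain ⟨L, L', R', R, v, rfl, rfl, rfl, hpar, hv⟩ := hg
  rw [List.forall_mem_append] at hnnm hnnp
  rcases Merges.of_append_cons hcm.of_append_left hcp.of_append_right h with
    ⟨L₀, a, u, rfl, hua, huv, rfl⟩ | ⟨L₀, a, w, R₀, rfl, rfl, hva, hvw, rfl⟩ |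
      ⟨u, w, R₀, rfl, huv, huw, rfl⟩
  · refine ⟨L₀, a :: u :: L', R', R, a + u + v, by simp, rfl, rfl, ?_, fun he => ?_⟩
    · simpa [parity_simps] using hpar
    · have := hv (by simpa [Nat.even_add_one] using he)
      simp only [redSum_cons, blueSum_cons]
      linarith
  · refine ⟨L₀, a :: L', R' ++ [w], R₀, a + v + w, by simp, by simp, rfl, ?_, fun he => ?_⟩
    · simpa [Nat.even_add_one, ← Nat.not_even_iff_odd, not_iff_not] using hpar
    · have hL' := (redSum_nonneg_and_blueSum_nonneg hnnm.2).2
      have hR' := (redSum_nonneg_and_blueSum_nonneg hnnp.1).1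
      have hR'e : Even R'.length := by simpa [parity_simps, he] using hpar
      simp only [redSum_cons, redSum_append, if_pos hR'e, blueSum_nil, add_zero]
      linarith [hnnp.2 w List.mem_cons_self]
  · refine ⟨L, L', R' ++ [u, w], R₀, v + u + w, rfl, by simp, rfl, ?_, fun he => ?_⟩
    · simpa [parity_simps] using hpar
    · have hR'o := Nat.not_even_iff_odd.2 (hpar.1 he)
      have := hv he
      simp only [redSum_append, if_neg hR'o, blueSum_cons, redSum_cons, blueSum_nil, add_zero]
      linarith

lemma reflTransGen (hcm : IsClosedConfig mm) (hcp : IsClosedConfig mp) (hnnm : ∀ x ∈ mm, 0 ≤ x)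
    (hnnp : ∀ x ∈ mp, 0 ≤ x) (hg : GluedConfig mm mp c) (h : ReflTransGen Merges c c') :
    GluedConfig mm mp c' := by
  induction h with
  | refl => exact hg
  | tail _ h ih => exact ih.merges hcm hcp hnnm hnnp h

lemma redSum_le (hnnm : ∀ x ∈ mm, 0 ≤ x) (hnnp : ∀ x ∈ mp, 0 ≤ x) (hg : GluedConfig mm mp c) :
    redSum c ≤ 2 * redSum mm + 2 * redSum mp := by
  obtain ⟨L, L', R', R, v, rfl, rfl, rfl, hpar, hv⟩ := hg
  rw [List.forall_mem_append] at hnnm hnnp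
  obtain ⟨hL, -⟩ := redSum_nonneg_and_blueSum_nonneg hnnm.1
  obtain ⟨hL'r, hL'b⟩ := redSum_nonneg_and_blueSum_nonneg hnnm.2
  obtain ⟨hR'r, -⟩ := redSum_nonneg_and_blueSum_nonneg hnnp.1
  obtain ⟨hRr, hRb⟩ := redSum_nonneg_and_blueSum_nonneg hnnp.2
  by_cases he : Even L.length
  · have hR'o := Nat.not_even_iff_odd.2 (hpar.1 he)
    simp only [redSum_append, redSum_cons, if_pos he, if_neg hR'o]
    linarith [hv he]
  · have hR'e : Even R'.length := by simpa [he] using hpar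
    simp only [redSum_append, blueSum_cons, if_neg he, if_pos hR'e]
    linarith

end GluedConfig

theorem redContent_glue_le_two_mul_general
    (lm lp : List ℝ) (b : ℝ)
    (hoddm : lm.length % 2 = 1)
    (hposm : ∀ x ∈ lm, 0 < x) (hposp : ∀ x ∈ lp, 0 < x) (hb : 0 < b)
    (sm : List Step) (mm : List ℝ) (hm : Reduces lm sm mm) (hcm : IsClosedConfig mm)
    (sp : List Step) (mp : List ℝ) (hp : Reduces lp sp mp) (hcp : IsClosedConfig mp)
    (s : List Step) (m : List ℝ) (h : Reduces (lm ++ b :: lp) s m)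
    (hc : IsClosedConfig m) :
    redSum m ≤ 2 * redSum mm + 2 * redSum mp := by
  have hpos : ∀ x ∈ lm ++ b :: lp, 0 < x := by
    simp only [List.mem_append, List.mem_cons]
    rintro x (hx | rfl | hx)
    exacts [hposm x hx, hb, hposp x hx]
  have hglue : ReflTransGen Merges (lm ++ b :: lp) (mm ++ b :: mp) := by
    have hm' := hm.reflTransGen.lift (· ++ b :: lp) fun _ _ h => h.append_right _
    have hp' := hp.reflTransGen.lift (mm ++ [b] ++ ·) fun _ _ h => h.append_left (mm ++ [b])
    simp only [List.append_assoc, List.singleton_append] at hp'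
    exact hm'.trans hp'
  obtain ⟨d, hmd, hgd⟩ := Merges.join_of_pos hpos h.reflTransGen hglue
  obtain rfl := hc.eq_of_reflTransGen hmd
  have hnnm : ∀ x ∈ mm, 0 ≤ x := fun x hx =>
    (Merges.reflTransGen_pos hm.reflTransGen hposm x hx).le
  have hnnp : ∀ x ∈ mp, 0 ≤ x := fun x hx =>
    (Merges.reflTransGen_pos hp.reflTransGen hposp x hx).le
  have hodd : Odd mm.length := by
    rw [Nat.odd_iff, Merges.reflTransGen_length_mod_two hm.reflTransGen, hoddm]
  exact ((GluedConfig.append_cons hodd mp b).reflTransGen hcm hcp hnnm hnnp hgd).redSum_le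
    hnnm hnnp

/-- If `C₋`, `C₊` are red-ended coloured-intervals and `B` is a blue
interval, then the red-content of the closure of `C₋ + B + C₊` satisfies
`r(C₋ + B + C₊) ≤ 2·r(C₋) + 2·r(C₊)`. (The closures are obtained by arbitrary complete
sequences of recolourings.) -/
theorem redContent_glue_le_two_mul
    (lm lp : List ℝ) (b : ℝ)
    (hoddm : lm.length % 2 = 1) (hoddp : lp.length % 2 = 1)
    (hposm : ∀ x ∈ lm, 0 < x) (hposp : ∀ x ∈ lp, 0 < x) (hb : 0 < b)
    (hnd : Nondegenerate (lm ++ b :: lp))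
    (sm : List Step) (mm : List ℝ) (hm : Reduces lm sm mm) (hcm : IsClosedConfig mm)
    (sp : List Step) (mp : List ℝ) (hp : Reduces lp sp mp) (hcp : IsClosedConfig mp)
    (s : List Step) (m : List ℝ) (h : Reduces (lm ++ b :: lp) s m)
    (hc : IsClosedConfig m) :
    redSum m ≤ 2 * redSum mm + 2 * redSum mp :=
  redContent_glue_le_two_mul_general lm lp b hoddm hposm hposp hb sm mm hm hcm sp mp hp hcp s m h hc
end

section
/- Let a ∈ [0, 1] and let X₁, X₂ be independent with Pareto distribution G(a). Then for all x ≥ 4, P(X₁ + X₂ ≥ x/2) = 8(a+1)²((4a+x)² + 6(a+1)(x−4)) / ((4a+x)³(2a+x−2)) + 192(a+1)⁴/(4a+x)⁴ · log((2a+x−2)/(2a+2)). -/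
/-!
The tail hypotheses determine the law of each `Xᵢ` (a finite measure on `ℝ` is fixed by its
values on the rays `[x, ∞)`), so `(X₁, X₂)` has the product law `G(a) ⊗ G(a)`. Conditioning on
`X₁ = u`, for `t ≥ 2`,
`P(X₁ + X₂ ≥ t) = ∫_{[1, t-1]} G'(u) P(X₂ ≥ t - u) du + P(X₁ > t - 1)`.
The integrand is `2(a+1)⁴ / (p³q²)` with `p = a + u`, `q = a + t - u` and `p + q = 2a + t`
fixed, so partial fractions give an elementary primitive whose simple poles produce the `log`.
-/

open MeasureTheory ProbabilityTheory Set Filter Topology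

lemma prod_setOf_le_add (μ ν : Measure ℝ) [SFinite ν] (t : ℝ) :
    (μ.prod ν) {p | t ≤ p.1 + p.2} = ∫⁻ u, ν (Ici (t - u)) ∂μ := by
  rw [Measure.prod_apply (s := {p : ℝ × ℝ | t ≤ p.1 + p.2})
    (measurableSet_le measurable_const (by fun_prop))]
  congr! 3 with u
  ext v
  simp [add_comm]

noncomputable section

def paretoGTail (a x : ℝ) : ℝ := (a + 1) ^ 2 / (a + x) ^ 2

def paretoGPDF (a x : ℝ) : ℝ := 2 * (a + 1) ^ 2 / (a + x) ^ 3

/-- The law `G(a)`: the Pareto law of scale `a + 1` and shape `2`, shifted by `-a`. -/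
def paretoG (a : ℝ) : Measure ℝ :=
  (volume.restrict (Ici 1)).withDensity fun y ↦ ENNReal.ofReal (paretoGPDF a y)

instance (a : ℝ) : SFinite (paretoG a) := by
  unfold paretoG; infer_instance

/-- `2(a+1)⁴` times a termwise primitive of
`1/(p³q²) = 1/(s²p³) + 2/(s³p²) + 3/(s⁴p) + 3/(s⁴q) + 1/(s³q²)`,
where `p = a + u`, `q = a + t - u` and `s = p + q = 2a + t`. -/
def paretoGConvPrimitive (a t u : ℝ) : ℝ :=
  2 * (a + 1) ^ 4 * (-1 / (2 * (2 * a + t) ^ 2 * (a + u) ^ 2) - 2 / ((2 * a + t) ^ 3 * (a + u))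
    + 3 / (2 * a + t) ^ 4 * (Real.log (a + u) - Real.log (a + t - u))
    + 1 / ((2 * a + t) ^ 3 * (a + t - u)))

end

section

variable {a : ℝ}

lemma paretoGTail_one (ha : -1 < a) : paretoGTail a 1 = 1 :=
  div_self (pow_ne_zero 2 (by linarith))

lemma paretoGTail_nonneg (x : ℝ) : 0 ≤ paretoGTail a x := by
  unfold paretoGTail; positivity

lemma paretoGPDF_nonneg {x : ℝ} (hx : 0 < a + x) : 0 ≤ paretoGPDF a x := by
  unfold paretoGPDF; positivity

@[fun_prop]
lemma measurable_paretoGTail : Measurable (paretoGTail a) := by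
  unfold paretoGTail; fun_prop

@[fun_prop]
lemma measurable_paretoGPDF : Measurable (paretoGPDF a) := by
  unfold paretoGPDF; fun_prop

lemma hasDerivAt_neg_paretoGTail {x : ℝ} (hx : 0 < a + x) :
    HasDerivAt (fun y ↦ -paretoGTail a y) (paretoGPDF a x) x := by
  have h := ((((hasDerivAt_id x).const_add a).fun_pow 2).fun_inv (pow_pos hx 2).ne').const_mul
    (-(a + 1) ^ 2)
  have hf : (fun y ↦ -paretoGTail a y) = fun y ↦ -(a + 1) ^ 2 * ((a + id y) ^ 2)⁻¹ := by
    funext y; simp only [paretoGTail, id]; ring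
  rw [hf]
  refine h.congr_deriv ?_
  simp only [paretoGPDF, id]; field_simp; ring

lemma tendsto_paretoGTail_atTop : Tendsto (paretoGTail a) atTop (𝓝 0) :=
  tendsto_const_nhds.div_atTop
    ((tendsto_pow_atTop two_ne_zero).comp (tendsto_atTop_add_const_left _ a tendsto_id))

lemma lintegral_paretoGPDF_Ioi {c : ℝ} (hc : 0 < a + c) :
    ∫⁻ y in Ioi c, ENNReal.ofReal (paretoGPDF a y) = ENNReal.ofReal (paretoGTail a c) := by
  have hderiv : ∀ y ∈ Ici c, HasDerivAt (fun y ↦ -paretoGTail a y) (paretoGPDF a y) y :=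
    fun y hy ↦ hasDerivAt_neg_paretoGTail (by linarith [mem_Ici.mp hy])
  have hnonneg : ∀ y ∈ Ioi c, 0 ≤ paretoGPDF a y :=
    fun y hy ↦ paretoGPDF_nonneg (by linarith [mem_Ioi.mp hy])
  have hlim : Tendsto (fun y ↦ -paretoGTail a y) atTop (𝓝 0) := by
    simpa using tendsto_paretoGTail_atTop.neg
  rw [← ofReal_integral_eq_lintegral_ofReal
      (integrableOn_Ioi_deriv_of_nonneg' hderiv hnonneg hlim)
      ((ae_restrict_iff' measurableSet_Ioi).mpr (Eventually.of_forall hnonneg)),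
    integral_Ioi_of_hasDerivAt_of_nonneg' hderiv hnonneg hlim, zero_sub, neg_neg]

lemma paretoG_Ici (ha : -1 < a) (s : ℝ) :
    paretoG a (Ici s) = ENNReal.ofReal (paretoGTail a (max s 1)) := by
  rw [paretoG, withDensity_apply _ measurableSet_Ici,
    Measure.restrict_restrict measurableSet_Ici, Ici_inter_Ici, ← setLIntegral_congr Ioi_ae_eq_Ici,
    lintegral_paretoGPDF_Ioi (by linarith [le_max_right s 1])]

lemma map_eq_paretoG {Ω : Type*} [MeasurableSpace Ω] {μ : Measure Ω} [IsProbabilityMeasure μ]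
    {X : Ω → ℝ} (ha : -1 < a) (hX : Measurable X)
    (htail : ∀ x, 1 ≤ x → μ {ω | x ≤ X ω} = ENNReal.ofReal (paretoGTail a x)) :
    μ.map X = paretoG a := by
  refine Measure.ext_of_Ici _ _ fun s ↦ ?_
  rw [Measure.map_apply hX measurableSet_Ici, paretoG_Ici ha]
  rcases le_total 1 s with hs | hs
  · rw [max_eq_left hs]; exact htail s hs
  · rw [max_eq_right hs, paretoGTail_one ha, ENNReal.ofReal_one]
    refine le_antisymm prob_le_one ?_
    calc (1 : ENNReal) = μ {ω | 1 ≤ X ω} := by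
          rw [htail 1 le_rfl, paretoGTail_one ha, ENNReal.ofReal_one]
      _ ≤ μ (X ⁻¹' Ici s) := measure_mono fun ω (hω : 1 ≤ X ω) ↦ hs.trans hω

lemma continuousOn_paretoGPDF_mul_paretoGTail (ha : -1 < a) {t : ℝ} :
    ContinuousOn (fun u ↦ paretoGPDF a u * paretoGTail a (t - u)) (Icc 1 (t - 1)) := by
  refine ContinuousOn.mul ?_ ?_ <;>
    exact continuousOn_const.div (by fun_prop)
      fun u hu ↦ pow_ne_zero _ (ne_of_gt (by linarith [hu.1, hu.2]))

lemma paretoG_prod_setOf_le_add (ha : -1 < a) {t : ℝ} (ht : 2 ≤ t) :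
    ((paretoG a).prod (paretoG a)) {p | t ≤ p.1 + p.2} = ENNReal.ofReal
      ((∫ u in 1..t - 1, paretoGPDF a u * paretoGTail a (t - u)) + paretoGTail a (t - 1)) := by
  have hnonneg : ∀ u ∈ Icc 1 (t - 1), 0 ≤ paretoGPDF a u * paretoGTail a (t - u) := fun u hu ↦
    mul_nonneg (paretoGPDF_nonneg (by linarith [hu.1])) (paretoGTail_nonneg _)
  have hbody : ∫⁻ u in Icc 1 (t - 1), ENNReal.ofReal (paretoGPDF a u) *
      ENNReal.ofReal (paretoGTail a (max (t - u) 1)) =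
        ENNReal.ofReal (∫ u in 1..t - 1, paretoGPDF a u * paretoGTail a (t - u)) := by
    rw [intervalIntegral.integral_of_le (by linarith), ← integral_Icc_eq_integral_Ioc,
      ofReal_integral_eq_lintegral_ofReal
        (continuousOn_paretoGPDF_mul_paretoGTail ha).integrableOn_Icc
        ((ae_restrict_iff' measurableSet_Icc).mpr (Eventually.of_forall hnonneg))]
    refine setLIntegral_congr_fun measurableSet_Icc fun u hu ↦ ?_
    rw [max_eq_left (by linarith [hu.2]),
      ← ENNReal.ofReal_mul (paretoGPDF_nonneg (by linarith [hu.1]))]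
  have htail : ∫⁻ u in Ioi (t - 1), ENNReal.ofReal (paretoGPDF a u) *
      ENNReal.ofReal (paretoGTail a (max (t - u) 1)) =
        ENNReal.ofReal (paretoGTail a (t - 1)) := by
    rw [← lintegral_paretoGPDF_Ioi (by linarith)]
    refine setLIntegral_congr_fun measurableSet_Ioi fun u hu ↦ ?_
    rw [max_eq_right (by linarith [mem_Ioi.mp hu]), paretoGTail_one ha, ENNReal.ofReal_one,
      mul_one]
  rw [prod_setOf_le_add]
  simp_rw [paretoG_Ici ha]
  rw [paretoG, lintegral_withDensity_eq_lintegral_mul _ (by fun_prop) (by fun_prop),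
    ← Icc_union_Ioi_eq_Ici (by linarith : (1 : ℝ) ≤ t - 1),
    lintegral_union measurableSet_Ioi ((Iic_disjoint_Ioi le_rfl).mono_left Icc_subset_Iic_self)]
  simp only [Pi.mul_apply]
  rw [hbody, htail, ENNReal.ofReal_add
    (intervalIntegral.integral_nonneg (by linarith) hnonneg) (paretoGTail_nonneg _)]

lemma hasDerivAt_paretoGConvPrimitive {t u : ℝ} (hu : 0 < a + u) (htu : 0 < a + t - u) :
    HasDerivAt (paretoGConvPrimitive a t) (paretoGPDF a u * paretoGTail a (t - u)) u := by
  have hs : 2 * a + t ≠ 0 := by linarith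
  have hp : HasDerivAt (fun u ↦ a + u) 1 u := (hasDerivAt_id u).const_add a
  have hq : HasDerivAt (fun u ↦ a + t - u) (-1) u := (hasDerivAt_id u).const_sub (a + t)
  have hp₂ := (hp.fun_pow 2).fun_inv (pow_pos hu 2).ne'
  have hp₁ := hp.fun_inv hu.ne'
  have hlog := (hp.log hu.ne').sub (hq.log htu.ne')
  have hq₁ := hq.fun_inv htu.ne'
  have h := ((((hp₂.const_mul (-1 / (2 * (2 * a + t) ^ 2))).sub
    (hp₁.const_mul (2 / (2 * a + t) ^ 3))).add (hlog.const_mul (3 / (2 * a + t) ^ 4))).add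
    (hq₁.const_mul (1 / (2 * a + t) ^ 3))).const_mul (2 * (a + 1) ^ 4)
  have hF : paretoGConvPrimitive a t = fun u ↦ 2 * (a + 1) ^ 4 *
      (-1 / (2 * (2 * a + t) ^ 2) * ((a + u) ^ 2)⁻¹ - 2 / (2 * a + t) ^ 3 * (a + u)⁻¹
        + 3 / (2 * a + t) ^ 4 * (Real.log (a + u) - Real.log (a + t - u))
        + 1 / (2 * a + t) ^ 3 * (a + t - u)⁻¹) := by
    funext v; simp only [paretoGConvPrimitive, div_eq_mul_inv, mul_inv]; ring
  rw [hF]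
  refine h.congr_deriv ?_
  simp only [paretoGPDF, paretoGTail, ← add_sub_assoc]
  field_simp
  ring

lemma integral_paretoGPDF_mul_paretoGTail (ha : -1 < a) {t : ℝ} (ht : 2 ≤ t) :
    ∫ u in 1..t - 1, paretoGPDF a u * paretoGTail a (t - u) =
      paretoGConvPrimitive a t (t - 1) - paretoGConvPrimitive a t 1 :=
  intervalIntegral.integral_eq_sub_of_hasDerivAt
    (fun u hu ↦ by
      rw [uIcc_of_le (by linarith)] at hu
      exact hasDerivAt_paretoGConvPrimitive (by linarith [hu.1]) (by linarith [hu.2]))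
    ((continuousOn_paretoGPDF_mul_paretoGTail ha).intervalIntegrable_of_Icc (by linarith))

lemma paretoGConvPrimitive_sub_add_paretoGTail (ha : -1 < a) {x : ℝ} (hx : 4 ≤ x) :
    paretoGConvPrimitive a (x / 2) (x / 2 - 1) - paretoGConvPrimitive a (x / 2) 1
        + paretoGTail a (x / 2 - 1) =
      8 * (a + 1) ^ 2 * ((4 * a + x) ^ 2 + 6 * (a + 1) * (x - 4)) /
          ((4 * a + x) ^ 3 * (2 * a + x - 2)) +
        192 * (a + 1) ^ 4 / (4 * a + x) ^ 4 * Real.log ((2 * a + x - 2) / (2 * a + 2)) := by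
  obtain ⟨t, rfl⟩ : ∃ t, x = 2 * t := ⟨x / 2, by ring⟩
  have hP : 0 < a + 1 := by linarith
  have hQ : 0 < a + t - 1 := by linarith
  have hs : 0 < 2 * a + t := by linarith
  have hlog : Real.log ((2 * a + 2 * t - 2) / (2 * a + 2)) =
      Real.log (a + t - 1) - Real.log (a + 1) := by
    rw [← Real.log_div hQ.ne' hP.ne']
    congr 1
    field_simp
  have h₀ : 2 * t / 2 = t := by ring
  have h₁ : a + (t - 1) = a + t - 1 := by ring
  have h₂ : a + t - (t - 1) = a + 1 := by ring
  have h₃ : 4 * a + 2 * t = 2 * (2 * a + t) := by ring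
  have h₄ : 2 * a + 2 * t - 2 = 2 * (a + t - 1) := by ring
  simp only [paretoGConvPrimitive, paretoGTail, h₀, h₁, h₂]
  rw [hlog, h₃, h₄]
  field_simp
  ring

end

theorem pareto_convolution_tail_general
    (a : ℝ) (ha : a ∈ Set.Icc (0 : ℝ) 1)
    {Ω : Type*} [MeasurableSpace Ω] (μ : Measure Ω) [IsProbabilityMeasure μ]
    (X₁ X₂ : Ω → ℝ) (hm₁ : Measurable X₁) (hm₂ : Measurable X₂)
    (hindep : IndepFun X₁ X₂ μ)
    (ht₁ : ∀ x : ℝ, 1 ≤ x → μ {ω | x ≤ X₁ ω} =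
      ENNReal.ofReal ((a + 1) ^ 2 / (a + x) ^ 2))
    (ht₂ : ∀ x : ℝ, 1 ≤ x → μ {ω | x ≤ X₂ ω} =
      ENNReal.ofReal ((a + 1) ^ 2 / (a + x) ^ 2)) :
    ∀ x : ℝ, 4 ≤ x →
      μ {ω | x / 2 ≤ X₁ ω + X₂ ω} =
        ENNReal.ofReal
          (8 * (a + 1) ^ 2 * ((4 * a + x) ^ 2 + 6 * (a + 1) * (x - 4)) /
              ((4 * a + x) ^ 3 * (2 * a + x - 2)) +
            192 * (a + 1) ^ 4 / (4 * a + x) ^ 4 *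
              Real.log ((2 * a + x - 2) / (2 * a + 2))) := by
  intro x hx
  have ha' : -1 < a := by linarith [ha.1]
  have hjoint : μ.map (fun ω ↦ (X₁ ω, X₂ ω)) = (paretoG a).prod (paretoG a) := by
    rw [(indepFun_iff_map_prod_eq_prod_map_map hm₁.aemeasurable hm₂.aemeasurable).mp hindep,
      map_eq_paretoG ha' hm₁ ht₁, map_eq_paretoG ha' hm₂ ht₂]
  calc μ {ω | x / 2 ≤ X₁ ω + X₂ ω}
      = μ.map (fun ω ↦ (X₁ ω, X₂ ω)) {p | x / 2 ≤ p.1 + p.2} :=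
        (Measure.map_apply (hm₁.prodMk hm₂)
          (measurableSet_le measurable_const (measurable_fst.add measurable_snd))).symm
    _ = _ := by
      rw [hjoint, paretoG_prod_setOf_le_add ha' (by linarith),
        integral_paretoGPDF_mul_paretoGTail ha' (by linarith),
        paretoGConvPrimitive_sub_add_paretoGTail ha' hx]

/-- Let `a ∈ [0, 1]` and `X₁, X₂` be independent with Pareto
distribution `G(a)` on `[1, ∞)` (`P(Xᵢ ≥ x) = (a + 1)²/(a + x)²` for `x ≥ 1`). Then for
all `x ≥ 4`,
`P(X₁ + X₂ ≥ x/2) = 8(a+1)²((4a+x)² + 6(a+1)(x−4)) / ((4a+x)³(2a+x−2))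
  + 192(a+1)⁴/(4a+x)⁴ · log((2a+x−2)/(2a+2))`. -/
theorem pareto_convolution_tail
    (a : ℝ) (ha : a ∈ Set.Icc (0 : ℝ) 1)
    {Ω : Type*} [MeasurableSpace Ω] (μ : Measure Ω) [IsProbabilityMeasure μ]
    (X₁ X₂ : Ω → ℝ) (hm₁ : Measurable X₁) (hm₂ : Measurable X₂)
    (hindep : IndepFun X₁ X₂ μ)
    (ht₁ : ∀ x : ℝ, 1 ≤ x → μ {ω | x ≤ X₁ ω} =
      ENNReal.ofReal ((a + 1) ^ 2 / (a + x) ^ 2))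
    (ht₂ : ∀ x : ℝ, 1 ≤ x → μ {ω | x ≤ X₂ ω} =
      ENNReal.ofReal ((a + 1) ^ 2 / (a + x) ^ 2))
    (hs₁ : μ {ω | X₁ ω < 1} = 0) (hs₂ : μ {ω | X₂ ω < 1} = 0) :
    ∀ x : ℝ, 4 ≤ x →
      μ {ω | x / 2 ≤ X₁ ω + X₂ ω} =
        ENNReal.ofReal
          (8 * (a + 1) ^ 2 * ((4 * a + x) ^ 2 + 6 * (a + 1) * (x - 4)) /
              ((4 * a + x) ^ 3 * (2 * a + x - 2)) +
            192 * (a + 1) ^ 4 / (4 * a + x) ^ 4 *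
              Real.log ((2 * a + x - 2) / (2 * a + 2))) :=
  pareto_convolution_tail_general a ha μ X₁ X₂ hm₁ hm₂ hindep ht₁ ht₂
end

section
/- Let ε ∈ (0, 1), a ∈ [0, 1], and let Y be geometric with parameter ε (P(Y = k) = ε^{k−1}(1 − ε), k ≥ 1) and X₁, X₂, … be i.i.d. G(a) random variables, independent of Y. Set Z = 2^{⌈log₂ Y⌉} Σ_{i=1}^Y X_i. Then for all x ≥ 4, P(Z ≥ x) ≤ (1 − ε)P(X₁ ≥ x) + Σ_{k=2}^∞ (1 − ε)ε^{k−1} · 4k³(k−1)² · (a + 1)²/(a + x)². -/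
open MeasureTheory ProbabilityTheory Finset

/-!
On `{Y = k}` with `k ≥ 2` the prefactor `2 ^ ⌈log₂ k⌉` is at most `2 (k - 1)`, so `Z ≥ x` forces
some `Xᵢ` with `i < k` to be at least `x / (2k(k - 1))`. A union bound over `i`, independence of
`Y` and `Xᵢ`, and `a + x / m ≥ (a + x) / m` for `m ≥ 1` give the `k`-th term of the series; the
case `k = 1` is the tail of `X₀` itself.
-/

noncomputable def paretoTail (a t : ℝ) : ℝ := (a + 1) ^ 2 / (a + t) ^ 2

lemma Nat.pow_clog_le_mul_pred {b k : ℕ} (hb : 1 < b) (hk : 1 < k) :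
    b ^ Nat.clog b k ≤ b * (k - 1) := by
  have hpos : 0 < Nat.clog b k := Nat.clog_pos hb hk
  have hlt : b ^ (Nat.clog b k - 1) < k := Nat.pow_pred_clog_lt_self hb hk
  calc b ^ Nat.clog b k = b * b ^ (Nat.clog b k - 1) := by
        rw [← pow_succ']
        congr 1
        omega
    _ ≤ b * (k - 1) := Nat.mul_le_mul_left b (by omega)

lemma Finset.exists_div_card_le_of_le_sum {ι : Type*} {s : Finset ι} {f : ι → ℝ} {x : ℝ}
    (hx : 0 < x) (h : x ≤ ∑ i ∈ s, f i) : ∃ i ∈ s, x / #s ≤ f i := by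
  have hs : s.Nonempty := by
    contrapose! hx
    simpa [hx] using h
  refine exists_le_of_sum_le hs ?_
  have hcard : (#s : ℝ) ≠ 0 := by simpa using hs.ne_empty
  rwa [sum_const, nsmul_eq_mul, mul_div_cancel₀ _ hcard]

lemma paretoTail_div_le {a x c : ℝ} (ha : 0 ≤ a) (hx : 0 < x) (hc : 1 ≤ c) :
    paretoTail a (x / c) ≤ c ^ 2 * paretoTail a x := by
  have hc0 : 0 < c := by linarith
  have hle : (a + x) / c ≤ a + x / c := by
    rw [add_div]
    gcongr
    exact div_le_self ha hc
  calc paretoTail a (x / c) ≤ (a + 1) ^ 2 / ((a + x) / c) ^ 2 := by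
        unfold paretoTail
        gcongr
    _ = c ^ 2 * paretoTail a x := by
        unfold paretoTail
        field_simp

lemma mul_paretoTail_div_two_pow_clog_mul_le {a x : ℝ} (ha : 0 ≤ a) (hx : 0 < x) {k : ℕ}
    (hk : 2 ≤ k) :
    k * paretoTail a (x / (2 ^ Nat.clog 2 k * k)) ≤
      4 * (k : ℝ) ^ 3 * ((k : ℝ) - 1) ^ 2 * paretoTail a x := by
  have hk1 : (1 : ℝ) ≤ k - 1 := by
    have : (2 : ℝ) ≤ k := by exact_mod_cast hk
    linarith
  have hpow : (2 : ℝ) ^ Nat.clog 2 k ≤ 2 * ((k : ℝ) - 1) := by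
    have := Nat.pow_clog_le_mul_pred one_lt_two (by omega : 1 < k)
    rw [← Nat.cast_le (α := ℝ)] at this
    push_cast [Nat.cast_sub (by omega : 1 ≤ k)] at this
    exact this
  have hc1 : (1 : ℝ) ≤ 2 ^ Nat.clog 2 k * k := by
    nlinarith [one_le_pow₀ (M₀ := ℝ) (n := Nat.clog 2 k) one_le_two]
  have hcm : (2 : ℝ) ^ Nat.clog 2 k * k ≤ 2 * ((k : ℝ) - 1) * k := by gcongr
  calc k * paretoTail a (x / (2 ^ Nat.clog 2 k * k))
      ≤ k * ((2 ^ Nat.clog 2 k * k) ^ 2 * paretoTail a x) := by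
        gcongr
        exact paretoTail_div_le ha hx hc1
    _ ≤ k * ((2 * ((k : ℝ) - 1) * k) ^ 2 * paretoTail a x) := by
        have : 0 ≤ paretoTail a x := by unfold paretoTail; positivity
        gcongr
    _ = 4 * (k : ℝ) ^ 3 * ((k : ℝ) - 1) ^ 2 * paretoTail a x := by ring

lemma natCast_mul_ofReal_mul_ofReal_paretoTail_le {p a x : ℝ} (hp : 0 ≤ p) (ha : 0 ≤ a)
    (hx : 0 < x) {k : ℕ} (hk : 2 ≤ k) :
    (k : ENNReal) * ENNReal.ofReal p * ENNReal.ofReal (paretoTail a (x / (2 ^ Nat.clog 2 k * k))) ≤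
      ENNReal.ofReal (p * (4 * (k : ℝ) ^ 3 * ((k : ℝ) - 1) ^ 2 * paretoTail a x)) := by
  rw [mul_comm (k : ENNReal), mul_assoc, ← ENNReal.ofReal_natCast,
    ← ENNReal.ofReal_mul (Nat.cast_nonneg k), ← ENNReal.ofReal_mul hp]
  exact ENNReal.ofReal_le_ofReal
    (mul_le_mul_of_nonneg_left (mul_paretoTail_div_two_pow_clog_mul_le ha hx hk) hp)

section Measure

variable {Ω : Type*} [MeasurableSpace Ω] {μ : Measure Ω}

lemma measure_le_le_ofReal_paretoTail [IsProbabilityMeasure μ] {Z : Ω → ℝ} {a t : ℝ}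
    (ha : 0 ≤ a) (ht : 0 < t)
    (hZ : ∀ s : ℝ, 1 ≤ s → μ {ω | s ≤ Z ω} = ENNReal.ofReal (paretoTail a s)) :
    μ {ω | t ≤ Z ω} ≤ ENNReal.ofReal (paretoTail a t) := by
  rcases le_or_gt 1 t with h1 | h1
  · exact (hZ t h1).le
  · -- below the support the formula exceeds `1`
    refine prob_le_one.trans (ENNReal.one_le_ofReal.mpr ?_)
    unfold paretoTail
    rw [one_le_div (by positivity)]
    gcongr

lemma ProbabilityTheory.IndepFun.measure_inter_eq_le_eq_mul {Y : Ω → ℕ} {Z : Ω → ℝ}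
    (h : IndepFun (fun ω => (Y ω : ℝ)) Z μ) (k : ℕ) (t : ℝ) :
    μ ({ω | Y ω = k} ∩ {ω | t ≤ Z ω}) = μ {ω | Y ω = k} * μ {ω | t ≤ Z ω} := by
  have hY : (fun ω => (Y ω : ℝ)) ⁻¹' {(k : ℝ)} = {ω | Y ω = k} := by
    ext ω
    simp
  have := h.measure_inter_preimage_eq_mul _ _ (measurableSet_singleton (k : ℝ))
    (measurableSet_Ici (a := t))
  rwa [hY] at this

lemma measure_le_two_pow_clog_mul_sum_inter_eq_le [IsProbabilityMeasure μ] {a x : ℝ}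
    {Y : Ω → ℕ} {X : ℕ → Ω → ℝ} (ha : 0 ≤ a) (hx : 0 < x)
    (hX : ∀ i, ∀ s : ℝ, 1 ≤ s → μ {ω | s ≤ X i ω} = ENNReal.ofReal (paretoTail a s))
    (hind : ∀ i, IndepFun (fun ω => (Y ω : ℝ)) (X i) μ) (k : ℕ) :
    μ ({ω | x ≤ (2 : ℝ) ^ Nat.clog 2 (Y ω) * ∑ i ∈ range (Y ω), X i ω} ∩ {ω | Y ω = k}) ≤
      k * μ {ω | Y ω = k} * ENNReal.ofReal (paretoTail a (x / (2 ^ Nat.clog 2 k * k))) := by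
  set t := x / (2 ^ Nat.clog 2 k * k)
  have hsub : {ω | x ≤ (2 : ℝ) ^ Nat.clog 2 (Y ω) * ∑ i ∈ range (Y ω), X i ω} ∩
      {ω | Y ω = k} ⊆ ⋃ i ∈ range k, {ω | Y ω = k} ∩ {ω | t ≤ X i ω} := by
    rintro ω ⟨hxω, hYω : Y ω = k⟩
    rw [Set.mem_ofPred_eq, hYω, ← div_le_iff₀' (by positivity)] at hxω
    obtain ⟨i, hi, hXi⟩ := exists_div_card_le_of_le_sum (by positivity) hxω
    rw [card_range, div_div] at hXi
    exact Set.mem_biUnion hi ⟨hYω, hXi⟩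
  calc _ ≤ ∑ i ∈ range k, μ ({ω | Y ω = k} ∩ {ω | t ≤ X i ω}) :=
        (measure_mono hsub).trans (measure_biUnion_finset_le _ _)
    _ = ∑ i ∈ range k, μ {ω | Y ω = k} * μ {ω | t ≤ X i ω} :=
        sum_congr rfl fun i _ => (hind i).measure_inter_eq_le_eq_mul k t
    _ ≤ ∑ i ∈ range k, μ {ω | Y ω = k} * ENNReal.ofReal (paretoTail a t) := by
        gcongr with i hi
        have hk : (0 : ℝ) < k := Nat.cast_pos.mpr ((Nat.zero_le i).trans_lt (mem_range.mp hi))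
        exact measure_le_le_ofReal_paretoTail ha (by positivity) (hX i)
    _ = _ := by rw [sum_const, card_range, nsmul_eq_mul, mul_assoc]

end Measure

theorem geometric_pareto_blowup_tail_bound_general
    (ε a : ℝ) (hε : ε ∈ Set.Ioo (0 : ℝ) 1) (ha : a ∈ Set.Icc (0 : ℝ) 1)
    {Ω : Type*} [MeasurableSpace Ω] (μ : Measure Ω) [IsProbabilityMeasure μ]
    (Y : Ω → ℕ) (X : ℕ → Ω → ℝ)
    (hY : ∀ k : ℕ, 1 ≤ k → μ {ω | Y ω = k} = ENNReal.ofReal (ε ^ (k - 1) * (1 - ε)))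
    (hX : ∀ i, ∀ x : ℝ, 1 ≤ x → μ {ω | x ≤ X i ω} =
      ENNReal.ofReal ((a + 1) ^ 2 / (a + x) ^ 2))
    (hindep : iIndepFun
      (fun o : Option ℕ => o.elim (fun ω => (Y ω : ℝ)) X) μ) :
    ∀ x : ℝ, 4 ≤ x →
      μ {ω | x ≤ (2 : ℝ) ^ (Nat.clog 2 (Y ω)) * ∑ i ∈ Finset.range (Y ω), X i ω} ≤
        ENNReal.ofReal ((1 - ε) * ((a + 1) ^ 2 / (a + x) ^ 2)) +
          ∑' k : ℕ, ENNReal.ofReal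
            ((1 - ε) * ε ^ (k + 1) * (4 * ((k : ℝ) + 2) ^ 3 * ((k : ℝ) + 1) ^ 2) *
              ((a + 1) ^ 2 / (a + x) ^ 2)) := by
  obtain ⟨hε0, hε1⟩ := hε
  intro x hx
  have hx0 : 0 < x := by linarith
  have hind : ∀ i, IndepFun (fun ω => (Y ω : ℝ)) (X i) μ := fun i =>
    hindep.indepFun (Option.some_ne_none i).symm
  have hterm := measure_le_two_pow_clog_mul_sum_inter_eq_le ha.1 hx0 hX hind
  set S := {ω | x ≤ (2 : ℝ) ^ (Nat.clog 2 (Y ω)) * ∑ i ∈ Finset.range (Y ω), X i ω}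
  have hcover : S ⊆ ⋃ k, S ∩ {ω | Y ω = k} := fun ω hω => Set.mem_iUnion.mpr ⟨Y ω, hω, rfl⟩
  calc μ S ≤ ∑' k, μ (S ∩ {ω | Y ω = k}) := (measure_mono hcover).trans (measure_iUnion_le _)
    _ = μ (S ∩ {ω | Y ω = 0}) + (μ (S ∩ {ω | Y ω = 1}) + ∑' j, μ (S ∩ {ω | Y ω = j + 2})) := by
        rw [tsum_eq_zero_add' ENNReal.summable, tsum_eq_zero_add' ENNReal.summable]
    _ ≤ 0 + (ENNReal.ofReal ((1 - ε) * paretoTail a x) + ∑' j : ℕ, ENNReal.ofReal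
            ((1 - ε) * ε ^ (j + 1) * (4 * ((j : ℝ) + 2) ^ 3 * ((j : ℝ) + 1) ^ 2) *
              paretoTail a x)) := by
        gcongr with j
        · simpa using hterm 0
        · simpa [hY 1 le_rfl, ENNReal.ofReal_mul (sub_nonneg.mpr hε1.le)] using hterm 1
        · refine (hterm (j + 2)).trans ?_
          rw [hY (j + 2) (by omega), show j + 2 - 1 = j + 1 from rfl]
          refine (natCast_mul_ofReal_mul_ofReal_paretoTail_le
            (mul_nonneg (by positivity) (sub_nonneg.mpr hε1.le)) ha.1 hx0 (by omega)).trans_eq ?_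
          congr 1
          push_cast
          ring
    _ = _ := zero_add _

/-- Let `ε ∈ (0, 1)`, `a ∈ [0, 1]`, `Y` geometric with parameter `ε`
(`P(Y = k) = ε^{k−1}(1 − ε)` for `k ≥ 1`), and `X₁, X₂, …` i.i.d. `G(a)` (Pareto on
`[1, ∞)`) random variables, independent of `Y`. Set `Z = 2^{⌈log₂ Y⌉} Σ_{i=1}^{Y} Xᵢ`.
Then for all `x ≥ 4`,
`P(Z ≥ x) ≤ (1 − ε)P(X₁ ≥ x) + Σ_{k=2}^∞ (1 − ε)ε^{k−1}·4k³(k−1)²·(a + 1)²/(a + x)²`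
(the series below being reindexed by `k ↦ k + 2`). -/
theorem geometric_pareto_blowup_tail_bound
    (ε a : ℝ) (hε : ε ∈ Set.Ioo (0 : ℝ) 1) (ha : a ∈ Set.Icc (0 : ℝ) 1)
    {Ω : Type*} [MeasurableSpace Ω] (μ : Measure Ω) [IsProbabilityMeasure μ]
    (Y : Ω → ℕ) (X : ℕ → Ω → ℝ)
    (hYmeas : Measurable Y) (hXmeas : ∀ i, Measurable (X i))
    (hY : ∀ k : ℕ, 1 ≤ k → μ {ω | Y ω = k} = ENNReal.ofReal (ε ^ (k - 1) * (1 - ε)))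
    (hY0 : μ {ω | Y ω = 0} = 0)
    (hX : ∀ i, ∀ x : ℝ, 1 ≤ x → μ {ω | x ≤ X i ω} =
      ENNReal.ofReal ((a + 1) ^ 2 / (a + x) ^ 2))
    (hXs : ∀ i, μ {ω | X i ω < 1} = 0)
    (hindep : iIndepFun
      (fun o : Option ℕ => o.elim (fun ω => (Y ω : ℝ)) X) μ) :
    ∀ x : ℝ, 4 ≤ x →
      μ {ω | x ≤ (2 : ℝ) ^ (Nat.clog 2 (Y ω)) * ∑ i ∈ Finset.range (Y ω), X i ω} ≤
        ENNReal.ofReal ((1 - ε) * ((a + 1) ^ 2 / (a + x) ^ 2)) +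
          ∑' k : ℕ, ENNReal.ofReal
            ((1 - ε) * ε ^ (k + 1) * (4 * ((k : ℝ) + 2) ^ 3 * ((k : ℝ) + 1) ^ 2) *
              ((a + 1) ^ 2 / (a + x) ^ 2)) :=
  geometric_pareto_blowup_tail_bound_general ε a hε ha μ Y X hY hX hindep
end
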